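/- arXiv:1311.2884 — 15 statements merged into one kernel-verified Lean document; each statement's English description precedes it below -/
import Mathlib

section
/- The map sending a permutation w in S_n with descents only in positions k_1 < ... < k_{d-1} to its code c_w (where (c_w)_i = #{ j : i < j ≤ n, w(i) > w(j) }) is a bijection onto the set of vectors c = (c_1,...,c_{n-1}) of nonnegative integers with c_j ≤ n - j for all j, such that c_j > c_{j+1} only when j and j+1 lie in different intervals I_i = [k_{i-1}+1, k_i] (with k_0 = 0, k_d = n, and c_n := 0). -/
/-!
The Lehmer code of `w` is injective: the values of `w` at positions `≥ i` are exactly those not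
taken before `i`, and `w i` is the element of that set having exactly `(c_w)_i` smaller elements.
It lands in the box `c_i ≤ n - 1 - i`, which has `n!` points, so it is a bijection onto the box.
Finally, for adjacent positions `i, i + 1`, a descent of `w` at `i` is the same as a descent of
its code at `i`, so the descent condition on `w` and on `c_w` agree.
-/

open Finset Nat

theorem Finset.strictMonoOn_card_filter_lt {α : Type*} [LinearOrder α] (s : Finset α) :
    StrictMonoOn (fun v => #{u ∈ s | u < v}) s := by
  intro v hv v' _ hvv'
  refine card_lt_card ((ssubset_iff_of_subset fun u hu => ?_).2 ⟨v, ?_, ?_⟩)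
  · rw [mem_filter] at hu ⊢
    exact ⟨hu.1, hu.2.trans hvv'⟩
  · exact mem_filter.2 ⟨hv, hvv'⟩
  · simp

theorem Fin.covBy_mk_add_one {n : ℕ} (i : Fin n) (h : (i : ℕ) + 1 < n) : i ⋖ ⟨i + 1, h⟩ :=
  ⟨Fin.lt_def.2 (Nat.lt_add_one _), fun k hik hki => by
    rw [Fin.lt_def] at hik hki
    exact absurd hki (by simp only; omega)⟩

theorem Fin.card_piFinset_Iic_sub_eq_factorial (n : ℕ) :
    #(Fintype.piFinset fun i : Fin n => Iic (n - 1 - i)) = n ! := by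
  simp only [Fintype.card_piFinset, Nat.card_Iic]
  rw [Fin.prod_univ_eq_prod_range (fun i => n - 1 - i + 1), prod_range_reflect (· + 1),
    prod_range_add_one_eq_factorial]

-- Positions are 1-based: a descent of `f` between `i` and `i + 1 : Fin n` sits at position `i + 1`.
def DescentsIn {α : Type*} [LT α] {n : ℕ} (K : Set ℕ) (f : Fin n → α) : Prop :=
  ∀ i : Fin n, ∀ h : (i : ℕ) + 1 < n, f ⟨i + 1, h⟩ < f i → (i : ℕ) + 1 ∈ K

namespace Equiv.Perm

variable {n : ℕ}

def lehmerCode (w : Perm (Fin n)) (i : Fin n) : ℕ := #{j | i < j ∧ w j < w i}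

variable (w : Perm (Fin n)) {i j : Fin n}

theorem lehmerCode_le (i : Fin n) : w.lehmerCode i ≤ n - 1 - i :=
  (card_le_card fun _ hk => mem_Ioi.2 (mem_filter.1 hk).2.1).trans_eq (Fin.card_Ioi i)

theorem lehmerCode_lt_of_lt (hij : i < j) (hw : w j < w i) : w.lehmerCode j < w.lehmerCode i := by
  refine card_lt_card ((ssubset_iff_of_subset fun k hk => ?_).2 ⟨j, ?_, ?_⟩)
  · rw [mem_filter] at hk ⊢
    exact ⟨hk.1, hij.trans hk.2.1, hk.2.2.trans hw⟩
  · exact mem_filter.2 ⟨mem_univ _, hij, hw⟩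
  · simp

theorem lehmerCode_le_of_covBy (hij : i ⋖ j) (hw : w i < w j) :
    w.lehmerCode i ≤ w.lehmerCode j := by
  refine card_le_card fun k hk => ?_
  simp only [mem_filter, mem_univ, true_and] at hk ⊢
  have hjk : j ≠ k := by rintro rfl; exact hw.not_gt hk.2
  exact ⟨(hij.ge_of_gt hk.1).lt_of_ne hjk, hk.2.trans hw⟩

theorem lehmerCode_lt_lehmerCode_iff (hij : i ⋖ j) :
    w.lehmerCode j < w.lehmerCode i ↔ w j < w i := by
  refine ⟨fun h => ?_, w.lehmerCode_lt_of_lt hij.lt⟩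
  by_contra hw
  have : w i < w j := (not_lt.1 hw).lt_of_ne (w.injective.ne hij.lt.ne)
  exact (w.lehmerCode_le_of_covBy hij this).not_gt h

theorem descentsIn_lehmerCode_iff (K : Set ℕ) : DescentsIn K w.lehmerCode ↔ DescentsIn K w :=
  forall₂_congr fun i h =>
    imp_congr_left (w.lehmerCode_lt_lehmerCode_iff (Fin.covBy_mk_add_one i h))

theorem lehmerCode_eq_card_filter_image (i : Fin n) :
    w.lehmerCode i = #{v ∈ (Ici i).image w | v < w i} := by
  rw [lehmerCode, filter_image, card_image_of_injective _ w.injective]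
  congr 1
  ext k
  simp only [mem_filter, mem_univ, true_and, mem_Ici]
  exact ⟨fun h => ⟨h.1.le, h.2⟩, fun h => ⟨h.1.lt_of_ne (by rintro rfl; exact h.2.false), h.2⟩⟩

theorem mem_image_Ici_iff {v : Fin n} : v ∈ (Ici i).image w ↔ ∀ j < i, w j ≠ v := by
  simp only [mem_image, mem_Ici]
  constructor
  · rintro ⟨k, hik, rfl⟩ j hj h
    exact (hj.trans_le hik).ne (w.injective h)
  · exact fun h => ⟨w.symm v, not_lt.1 fun hv => h _ hv (w.apply_symm_apply v), w.apply_symm_apply v⟩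

theorem lehmerCode_injective : Function.Injective (lehmerCode (n := n)) := by
  intro w₁ w₂ hc
  ext1 i
  induction i using WellFoundedLT.induction with
  | _ i ih =>
  have himage : (Ici i).image w₁ = (Ici i).image w₂ := by
    ext v
    simp only [mem_image_Ici_iff]
    exact forall₂_congr fun j hj => by rw [ih j hj]
  refine (strictMonoOn_card_filter_lt _).injOn (mem_image_of_mem _ (mem_Ici.2 le_rfl))
    (himage ▸ mem_image_of_mem _ (mem_Ici.2 le_rfl)) ?_
  rw [← lehmerCode_eq_card_filter_image, hc, lehmerCode_eq_card_filter_image, himage]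

theorem lehmerCode_bijOn :
    Set.BijOn (lehmerCode (n := n)) .univ {c | ∀ i : Fin n, c i ≤ n - 1 - i} := by
  have hmaps : Set.MapsTo (lehmerCode (n := n)) (univ : Finset (Perm (Fin n)))
      (Fintype.piFinset fun i : Fin n => Iic (n - 1 - i)) := fun w _ =>
    Fintype.mem_piFinset.2 fun i => mem_Iic.2 (w.lehmerCode_le i)
  have hsurj := surjOn_of_injOn_of_card_le _ hmaps lehmerCode_injective.injOn <| by
    rw [Finset.card_univ, Fintype.card_perm, Fintype.card_fin,
      Fin.card_piFinset_Iic_sub_eq_factorial]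
  refine ⟨fun w _ => w.lehmerCode_le, lehmerCode_injective.injOn, fun c hc => ?_⟩
  obtain ⟨w, -, hw⟩ := hsurj (Fintype.mem_piFinset.2 fun i => mem_Iic.2 (hc i))
  exact ⟨w, trivial, hw⟩

end Equiv.Perm

theorem stmt0_general (n : ℕ) (K : Finset ℕ) :
    Set.BijOn
      (fun (w : Equiv.Perm (Fin n)) (i : Fin n) =>
        (Finset.univ.filter (fun j : Fin n => i < j ∧ w j < w i)).card)
      {w : Equiv.Perm (Fin n) |
        ∀ i : Fin n, ∀ h : (i : ℕ) + 1 < n, w ⟨(i : ℕ) + 1, h⟩ < w i → (i : ℕ) + 1 ∈ K}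
      {c : Fin n → ℕ |
        (∀ i : Fin n, c i ≤ n - 1 - (i : ℕ)) ∧
        (∀ i : Fin n, ∀ h : (i : ℕ) + 1 < n, c ⟨(i : ℕ) + 1, h⟩ < c i → (i : ℕ) + 1 ∈ K)} := by
  have h := Equiv.Perm.lehmerCode_bijOn.inter_mapsTo
    (s₂ := {w : Equiv.Perm (Fin n) | DescentsIn K w}) (t₂ := {c : Fin n → ℕ | DescentsIn K c})
    (fun w hw => (w.descentsIn_lehmerCode_iff K).2 hw)
    (fun w hw => (w.descentsIn_lehmerCode_iff K).1 hw.2)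
  rwa [Set.univ_inter, ← Set.ofPred_and] at h

/-- The map sending a permutation `w ∈ S_n` with descents only in
positions belonging to `K = {k_1 < ... < k_{d-1}} ⊆ (0,n)` to its code
(`(c_w)_i = #{j : i < j ≤ n, w(i) > w(j)}`, 1-based positions encoded by `Fin n`)
is a bijection onto the set of vectors `c` of nonnegative integers with
`c_j ≤ n - j` such that `c_j > c_{j+1}` only when positions `j` and `j+1` lie in
different intervals `I_i = [k_{i-1}+1, k_i]`, i.e. only when `j ∈ K`
(with `c_n := 0`, which here is the last entry of the `Fin n`-indexed vector). -/
theorem stmt0 (n : ℕ) (K : Finset ℕ) (hK : ∀ x ∈ K, 0 < x ∧ x < n) :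
    Set.BijOn
      (fun (w : Equiv.Perm (Fin n)) (i : Fin n) =>
        (Finset.univ.filter (fun j : Fin n => i < j ∧ w j < w i)).card)
      {w : Equiv.Perm (Fin n) |
        ∀ i : Fin n, ∀ h : (i : ℕ) + 1 < n, w ⟨(i : ℕ) + 1, h⟩ < w i → (i : ℕ) + 1 ∈ K}
      {c : Fin n → ℕ |
        (∀ i : Fin n, c i ≤ n - 1 - (i : ℕ)) ∧
        (∀ i : Fin n, ∀ h : (i : ℕ) + 1 < n, c ⟨(i : ℕ) + 1, h⟩ < c i → (i : ℕ) + 1 ∈ K)} :=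
  stmt0_general n K
end

section
/- Let w be a permutation in S_n with descents only in positions k_1 < ... < k_{d-1}, and let I_i = [k_{i-1}+1, k_i] (k_0 = 0, k_d = n). Then for each pair i < j, the restriction of the inversion set of w to the region I_i × I_j is a lower order ideal of I_i × I_j under the componentwise order where (a',b') ≤ (a,b) iff a ≤ a' and b' ≤ b. -/

lemma seg_mono (n : ℕ) (K : Finset ℕ) (w : Equiv.Perm (Fin n))
    (hw : ∀ i : Fin n, ∀ h : (i : ℕ) + 1 < n, w ⟨(i : ℕ) + 1, h⟩ < w i → (i : ℕ) + 1 ∈ K)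
    (x x' : Fin n) (h : x ≤ x')
    (hs : ∀ m ∈ K, ¬((x : ℕ) + 1 ≤ m ∧ m < (x' : ℕ) + 1)) : w x ≤ w x' := by
  obtain ⟨k, hk⟩ : ∃ k, (x' : ℕ) = (x : ℕ) + k := ⟨x' - x, by omega⟩
  clear h
  induction k generalizing x' with
  | zero =>
    have : x = x' := Fin.ext (by omega)
    simp [this]
  | succ k ih =>
    have hlt : (x : ℕ) + k < n := by omega
    set y : Fin n := ⟨(x : ℕ) + k, hlt⟩ with hy
    have hyv : (y : ℕ) = (x : ℕ) + k := rfl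
    have h1 : w x ≤ w y := ih y (fun m hm ⟨h1, h2⟩ => hs m hm ⟨h1, by omega⟩) hyv.symm
    have h2 : w y ≤ w x' := by
      have hx' : (x' : ℕ) = (y : ℕ) + 1 := by omega
      have : ¬ (w x' < w y) := by
        intro hlt2
        have := hw y (by omega) (by convert hlt2 using 2; exact Fin.ext hx'.symm)
        exact hs _ this ⟨by omega, by omega⟩
      exact le_of_not_gt this
    exact h1.trans h2

/-- Let `w ∈ S_n` have descents only in positions of
`K = {k_1 < ... < k_{d-1}} ⊆ (0,n)` (positions 1-based; position `i+1` for
`i : Fin n`).  Two positions `x ≤ x'` lie in the same interval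
`I_i = [k_{i-1}+1, k_i]` iff there is no `m ∈ K` with `x ≤ m < x'`, and the
intervals of `a'` and `b'` are distinct regions `I_i × I_j` with `i < j` iff
some `m ∈ K` separates them.  Then the restriction of the inversion set of `w`
to a region `I_i × I_j` is a lower order ideal: if `(a,b)` is an inversion,
`a ≤ a'` with `a, a'` in the same interval, `b' ≤ b` with `b', b` in the same
interval, and `a'`,`b'` lie in regions `I_i`, `I_j` with `i < j`, then
`(a',b')` is an inversion. -/
theorem stmt1 (n : ℕ) (K : Finset ℕ) (hK : ∀ x ∈ K, 0 < x ∧ x < n)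
    (w : Equiv.Perm (Fin n))
    (hw : ∀ i : Fin n, ∀ h : (i : ℕ) + 1 < n, w ⟨(i : ℕ) + 1, h⟩ < w i → (i : ℕ) + 1 ∈ K)
    (a a' b b' : Fin n)
    (haa' : a ≤ a')
    (hsame_a : ∀ m ∈ K, ¬((a : ℕ) + 1 ≤ m ∧ m < (a' : ℕ) + 1))
    (hb'b : b' ≤ b)
    (hsame_b : ∀ m ∈ K, ¬((b' : ℕ) + 1 ≤ m ∧ m < (b : ℕ) + 1))
    (hregion : ∃ m ∈ K, (a' : ℕ) + 1 ≤ m ∧ m < (b' : ℕ) + 1)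
    (hinv : a < b ∧ w b < w a) :
    a' < b' ∧ w b' < w a' := by
  obtain ⟨m, hm, h1, h2⟩ := hregion
  have hab : a' < b' := by
    rw [Fin.lt_def]; omega
  refine ⟨hab, ?_⟩
  have ha : w a ≤ w a' := seg_mono n K w hw a a' haa' hsame_a
  have hb : w b' ≤ w b := seg_mono n K w hw b' b hb'b hsame_b
  exact lt_of_le_of_lt hb (lt_of_lt_of_le hinv.2 ha)
end

section
/- Let w ∈ S_n and let a < b. If there exists m with a < m < b such that w(a) > w(m) and w(m) > w(b), then w(a) > w(b). Consequently, if more than half of the 2(b-a-1) 'hook' pairs {(a,l) : a < l < b} ∪ {(j,b) : a < j < b} are inversions of w, then (a,b) is an inversion of w; and if fewer than half are inversions, then (a,b) is not an inversion of w. -/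
/-- Let `w ∈ S_n` and `a < b`.  If there exists `m` with
`a < m < b`, `w(a) > w(m)` and `w(m) > w(b)`, then `w(a) > w(b)`.
Consequently, writing `N` for the number of hook pairs
`{(a,l) : a < l < b} ∪ {(j,b) : a < j < b}` that are inversions of `w`:
if `N` exceeds half of `2(b-a-1)`, i.e. `N > b-a-1`, then `(a,b)` is an
inversion of `w`, and if `N < b-a-1` then it is not. -/
theorem stmt2 (n : ℕ) (w : Equiv.Perm (Fin n)) (a b : Fin n) (hab : a < b) :
    ((∃ m : Fin n, a < m ∧ m < b ∧ w m < w a ∧ w b < w m) → w b < w a) ∧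
    (∀ N : ℕ,
      N = (Finset.univ.filter (fun l : Fin n => a < l ∧ l < b ∧ w l < w a)).card +
          (Finset.univ.filter (fun j : Fin n => a < j ∧ j < b ∧ w b < w j)).card →
      ((b : ℕ) - (a : ℕ) - 1 < N → w b < w a) ∧
      (N < (b : ℕ) - (a : ℕ) - 1 → ¬ w b < w a)) := by
  constructor
  · rintro ⟨m, -, -, h1, h2⟩
    exact h2.trans h1
  · intro N hN
    set A := Finset.univ.filter (fun l : Fin n => a < l ∧ l < b ∧ w l < w a) with hAdef
    set B := Finset.univ.filter (fun j : Fin n => a < j ∧ j < b ∧ w b < w j) with hBdef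
    have hScard : (Finset.Ioo a b).card = (b : ℕ) - (a : ℕ) - 1 := Fin.card_Ioo a b
    constructor
    · intro hgt
      by_contra hcon
      push_neg at hcon
      have hinter : A ∩ B = ∅ := by
        ext l
        simp only [hAdef, hBdef, Finset.mem_inter, Finset.mem_filter, Finset.mem_univ,
          true_and, Finset.notMem_empty, iff_false]
        rintro ⟨⟨-, -, h1⟩, ⟨-, -, h2⟩⟩
        exact absurd hcon (not_le.mpr (h2.trans h1))
      have hsub : A ∪ B ⊆ Finset.Ioo a b := by
        intro l hl
        rcases Finset.mem_union.mp hl with h | h <;>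
          simp only [hAdef, hBdef, Finset.mem_filter] at h <;>
          exact Finset.mem_Ioo.mpr ⟨h.2.1, h.2.2.1⟩
      have := Finset.card_union_add_card_inter A B
      rw [hinter, Finset.card_empty, add_zero] at this
      have hle : N ≤ (b : ℕ) - (a : ℕ) - 1 := by
        rw [hN, ← this, ← hScard]
        exact Finset.card_le_card hsub
      omega
    · intro hlt hba
      have hsub : Finset.Ioo a b ⊆ A ∪ B := by
        intro l hl
        rw [Finset.mem_Ioo] at hl
        rcases lt_or_ge (w l) (w a) with h | h
        · exact Finset.mem_union_left _ (by
            simp only [hAdef, Finset.mem_filter, Finset.mem_univ, true_and]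
            exact ⟨hl.1, hl.2, h⟩)
        · exact Finset.mem_union_right _ (by
            simp only [hBdef, Finset.mem_filter, Finset.mem_univ, true_and]
            exact ⟨hl.1, hl.2, lt_of_lt_of_le hba h⟩)
      have h1 : (b : ℕ) - (a : ℕ) - 1 ≤ N := by
        rw [hN, ← hScard]
        exact (Finset.card_le_card hsub).trans (Finset.card_union_le A B)
      omega
end

section
/- For each vector c = (c_1,...,c_{n-1}) of nonnegative integers with c_j ≤ n - j for all j, there is exactly one subset S of {(a,b) : 1 ≤ a < b ≤ n} such that for every a the number of pairs (a,b) in S equals c_a, and S satisfies the hook condition: for every pair (a,b), if more than half of the hook pairs of (a,b) belong to S then (a,b) ∈ S, and if more than half of the hook pairs of (a,b) do not belong to S then (a,b) ∉ S. -/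
open Finset

/-- Existence of a function (permutation of `range n`) with a given Lehmer code. -/
lemma exists_code (n : ℕ) : ∀ d : ℕ → ℕ, (∀ a < n, d a < n - a) →
    ∃ f : ℕ → ℕ, (Finset.range n).image f = Finset.range n ∧
      ∀ a < n, ((Finset.range n).filter (fun b => a < b ∧ f b < f a)).card = d a := by
  induction n with
  | zero => exact fun d _ => ⟨id, by simp, by omega⟩
  | succ n IH =>
    intro d hd
    obtain ⟨g, hgim, hgcode⟩ := IH (fun a => d (a + 1))
      (fun a ha => by have := hd (a + 1) (by omega); omega)
    have hδn : d 0 ≤ n := by have := hd 0 (by omega); omega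
    have hgmem : ∀ a < n, g a < n := by
      intro a ha
      have : g a ∈ (Finset.range n).image g := mem_image.mpr ⟨a, mem_range.mpr ha, rfl⟩
      rw [hgim, mem_range] at this; exact this
    have hginj : Set.InjOn g (Finset.range n) :=
      Finset.injOn_of_card_image_eq (by rw [hgim])
    have hgsurj : ∀ v < n, ∃ a < n, g a = v := by
      intro v hv
      have : v ∈ (Finset.range n).image g := by rw [hgim, mem_range]; exact hv
      obtain ⟨a, ha, hga⟩ := mem_image.mp this
      exact ⟨a, mem_range.mp ha, hga⟩
    set s : ℕ → ℕ := fun v => if d 0 ≤ v then v + 1 else v with hs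
    have hscompat : ∀ x y, s x < s y ↔ x < y := by
      intro x y; simp only [hs]; split_ifs <;> omega
    have hsδ : ∀ x, s x < d 0 ↔ x < d 0 := by
      intro x; simp only [hs]; split_ifs <;> omega
    refine ⟨fun a => match a with | 0 => d 0 | a' + 1 => s (g a'), ?_, ?_⟩
    · ext v
      simp only [mem_image, mem_range]
      constructor
      · rintro ⟨a, ha, rfl⟩
        match a with
        | 0 => show d 0 < n + 1; omega
        | a' + 1 =>
          show s (g a') < n + 1
          have hg : g a' < n := hgmem _ (by omega)
          simp only [hs]; split_ifs <;> omega
      · intro hv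
        by_cases hvδ : v = d 0
        · exact ⟨0, by omega, hvδ.symm⟩
        · have hv' : (if v < d 0 then v else v - 1) < n := by split_ifs <;> omega
          obtain ⟨a, ha, hga⟩ := hgsurj _ hv'
          refine ⟨a + 1, by omega, ?_⟩
          show s (g a) = v
          rw [hga]; simp only [hs]
          split_ifs at * <;> omega
    · intro a ha
      match a with
      | 0 =>
        have key : ((Finset.range n).filter (fun b => g b < d 0)).card = d 0 := by
          have h1 : ((Finset.range n).image g).filter (· < d 0)
              = ((Finset.range n).filter (fun a => g a < d 0)).image g :=
            Finset.filter_image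
          have h2 : ((Finset.range n).image g).filter (· < d 0) = Finset.range (d 0) := by
            rw [hgim]; ext x; simp only [mem_filter, mem_range]; omega
          have h3 : (((Finset.range n).filter (fun a => g a < d 0)).image g).card
              = ((Finset.range n).filter (fun a => g a < d 0)).card :=
            Finset.card_image_of_injOn (hginj.mono (by
              exact_mod_cast Finset.filter_subset _ _))
          rw [← h3, ← h1, h2, Finset.card_range]
        refine Eq.trans ?_ key
        apply Finset.card_bij' (fun b _ => b - 1) (fun b _ => b + 1)
        · intro b hb
          simp only [mem_filter, mem_range] at hb; omega
        · intro b _; omega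
        · intro b hb
          simp only [mem_filter, mem_range] at hb ⊢
          obtain ⟨hb1, hb2, hb3⟩ := hb
          obtain ⟨b', rfl⟩ : ∃ b', b = b' + 1 := ⟨b - 1, by omega⟩
          have h4 : s (g b') < d 0 := hb3
          rw [hsδ] at h4
          exact ⟨by omega, by simpa using h4⟩
        · intro b hb
          simp only [mem_filter, mem_range] at hb ⊢
          exact ⟨by omega, by omega, (hsδ _).mpr hb.2⟩
      | a' + 1 =>
        have key := hgcode a' (by omega)
        refine Eq.trans ?_ key
        apply Finset.card_bij' (fun b _ => b - 1) (fun b _ => b + 1)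
        · intro b hb
          simp only [mem_filter, mem_range] at hb; omega
        · intro b _; omega
        · intro b hb
          simp only [mem_filter, mem_range] at hb ⊢
          obtain ⟨hb1, hb2, hb3⟩ := hb
          obtain ⟨b', rfl⟩ : ∃ b', b = b' + 1 := ⟨b - 1, by omega⟩
          have h4 : s (g b') < s (g a') := hb3
          rw [hscompat] at h4
          exact ⟨by omega, by omega, by simpa using h4⟩
        · intro b hb
          simp only [mem_filter, mem_range] at hb ⊢
          exact ⟨by omega, by omega, (hscompat _ _).mpr hb.2.2⟩

lemma card_pair_fst {n : ℕ} (S : Finset (Fin n × Fin n)) (a : Fin n) (q : Fin n → Prop)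
    [DecidablePred q] :
    (S.filter (fun p => p.1 = a ∧ q p.2)).card
      = (univ.filter (fun l : Fin n => (a, l) ∈ S ∧ q l)).card := by
  apply Finset.card_bij (fun p _ => p.2)
  · intro p hp
    simp only [mem_filter] at hp
    obtain ⟨hS, h1, h2⟩ := hp
    simp only [mem_filter, mem_univ, true_and]
    subst h1
    exact ⟨hS, h2⟩
  · intro p hp p' hp' h
    simp only [mem_filter] at hp hp'
    exact Prod.ext (hp.2.1.trans hp'.2.1.symm) h
  · intro l hl
    simp only [mem_filter, mem_univ, true_and] at hl
    exact ⟨(a, l), by simp [mem_filter, hl.1, hl.2], rfl⟩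

lemma card_pair_snd {n : ℕ} (S : Finset (Fin n × Fin n)) (b : Fin n) (q : Fin n → Prop)
    [DecidablePred q] :
    (S.filter (fun p => p.2 = b ∧ q p.1)).card
      = (univ.filter (fun l : Fin n => (l, b) ∈ S ∧ q l)).card := by
  apply Finset.card_bij (fun p _ => p.1)
  · intro p hp
    simp only [mem_filter] at hp
    obtain ⟨hS, h1, h2⟩ := hp
    simp only [mem_filter, mem_univ, true_and]
    subst h1
    exact ⟨hS, h2⟩
  · intro p hp p' hp' h
    simp only [mem_filter] at hp hp'
    exact Prod.ext h (hp.2.1.trans hp'.2.1.symm)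
  · intro l hl
    simp only [mem_filter, mem_univ, true_and] at hl
    exact ⟨(l, b), by simp [mem_filter, hl.1, hl.2], rfl⟩

/-- Any set satisfying the hook condition is closed and co-closed. -/
lemma closed_coclosed {n : ℕ} (S : Finset (Fin n × Fin n))
    (h3 : ∀ a b : Fin n, a < b →
        ∀ m : ℕ,
          m = (S.filter (fun p => p.1 = a ∧ a < p.2 ∧ p.2 < b)).card +
              (S.filter (fun p => p.2 = b ∧ a < p.1 ∧ p.1 < b)).card →
          (((b : ℕ) - (a : ℕ) - 1 < m → (a, b) ∈ S) ∧
           (m < (b : ℕ) - (a : ℕ) - 1 → (a, b) ∉ S))) :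
    ∀ (d : ℕ) (a l b : Fin n), (b : ℕ) - (a : ℕ) ≤ d → a < l → l < b →
      (((a, l) ∈ S → (l, b) ∈ S → (a, b) ∈ S) ∧
       ((a, l) ∉ S → (l, b) ∉ S → (a, b) ∉ S)) := by
  intro d
  induction d using Nat.strong_induction_on with
  | _ d IH =>
  intro a l b hd hal hlb
  have hal' : (a : ℕ) < l := hal
  have hlb' : (l : ℕ) < b := hlb
  have hab : a < b := hal.trans hlb
  set Al := univ.filter (fun k : Fin n => (a, k) ∈ S ∧ a < k ∧ k < b) with hAl
  set Bl := univ.filter (fun k : Fin n => (k, b) ∈ S ∧ a < k ∧ k < b) with hBl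
  set Mid := univ.filter (fun k : Fin n => a < k ∧ k < b) with hMid
  have hMidcard : Mid.card = (b : ℕ) - (a : ℕ) - 1 := by
    have : Mid = Finset.Ioo a b := by
      ext k; simp [hMid, Finset.mem_Ioo]
    rw [this, Fin.card_Ioo]
  have hAlsub : Al ⊆ Mid := by
    intro k hk
    simp only [hAl, hMid, mem_filter, mem_univ, true_and] at hk ⊢
    exact hk.2
  have hBlsub : Bl ⊆ Mid := by
    intro k hk
    simp only [hBl, hMid, mem_filter, mem_univ, true_and] at hk ⊢
    exact hk.2
  have hook := h3 a b hab (Al.card + Bl.card)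
    (by rw [card_pair_fst S a (fun l => a < l ∧ l < b),
            card_pair_snd S b (fun l => a < l ∧ l < b)])
  constructor
  · intro hS1 hS2
    by_contra habS
    have hm : Al.card + Bl.card ≤ (b : ℕ) - (a : ℕ) - 1 := by
      by_contra h'
      exact habS (hook.1 (by omega))
    have hnsub : ¬ (Mid ⊆ Al ∪ Bl) := by
      intro hsub
      have hlmem : l ∈ Al ∩ Bl := by
        simp only [hAl, hBl, mem_inter, mem_filter, mem_univ, true_and]
        exact ⟨⟨hS1, hal, hlb⟩, ⟨hS2, hal, hlb⟩⟩
      have h1 := Finset.card_union_add_card_inter Al Bl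
      have h2 : Mid.card ≤ (Al ∪ Bl).card := Finset.card_le_card hsub
      have h3' : 1 ≤ (Al ∩ Bl).card := Finset.card_pos.mpr ⟨l, hlmem⟩
      omega
    obtain ⟨k, hkMid, hk⟩ := Finset.not_subset.mp hnsub
    simp only [hMid, mem_filter, mem_univ, true_and] at hkMid
    obtain ⟨hak, hkb⟩ := hkMid
    have hakS : (a, k) ∉ S := fun h =>
      hk (Finset.mem_union_left _ (by simp [hAl, h, hak, hkb]))
    have hkbS : (k, b) ∉ S := fun h =>
      hk (Finset.mem_union_right _ (by simp [hBl, h, hak, hkb]))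
    have hak' : (a : ℕ) < k := hak
    have hkb' : (k : ℕ) < b := hkb
    rcases lt_trichotomy k l with hkl | hkl | hkl
    · have hkl' : (k : ℕ) < l := hkl
      have e1 : (k, l) ∈ S := by
        by_contra hklS
        exact ((IH ((l : ℕ) - a) (by omega) a k l le_rfl hak hkl).2 hakS hklS) hS1
      exact hkbS ((IH ((b : ℕ) - k) (by omega) k l b le_rfl hkl hlb).1 e1 hS2)
    · exact hakS (hkl ▸ hS1)
    · have hkl' : (l : ℕ) < k := hkl
      have e1 : (l, k) ∈ S := by
        by_contra hlkS
        exact ((IH ((b : ℕ) - l) (by omega) l k b le_rfl hkl hkb).2 hlkS hkbS) hS2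
      exact hakS ((IH ((k : ℕ) - a) (by omega) a l k le_rfl hal hkl).1 hS1 e1)
  · intro hS1 hS2
    by_contra habS
    have hm : (b : ℕ) - (a : ℕ) - 1 ≤ Al.card + Bl.card := by
      by_contra h'
      exact hook.2 (by omega) habS
    have hinter : (Al ∩ Bl).Nonempty := by
      by_contra hdisj
      rw [Finset.not_nonempty_iff_eq_empty] at hdisj
      have h1 := Finset.card_union_add_card_inter Al Bl
      have hsub : Al ∪ Bl ⊆ Mid.erase l := by
        intro k hk
        rcases Finset.mem_union.mp hk with h | h
        · simp only [hAl, mem_filter, mem_univ, true_and] at h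
          refine Finset.mem_erase.mpr ⟨?_, hAlsub (by simp [hAl, h])⟩
          rintro rfl; exact hS1 h.1
        · simp only [hBl, mem_filter, mem_univ, true_and] at h
          refine Finset.mem_erase.mpr ⟨?_, hBlsub (by simp [hBl, h])⟩
          rintro rfl; exact hS2 h.1
      have h2 := Finset.card_le_card hsub
      have h3' := Finset.card_erase_of_mem (a := l)
        (by simp [hMid, hal, hlb] : l ∈ Mid)
      have hdcard : (Al ∩ Bl).card = 0 := by rw [hdisj]; exact rfl
      omega
    obtain ⟨k, hkmem⟩ := hinter
    simp only [hAl, hBl, mem_inter, mem_filter, mem_univ, true_and] at hkmem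
    obtain ⟨⟨hakS, hak, hkb⟩, ⟨hkbS, _, _⟩⟩ := hkmem
    have hak' : (a : ℕ) < k := hak
    have hkb' : (k : ℕ) < b := hkb
    rcases lt_trichotomy k l with hkl | hkl | hkl
    · have hkl' : (k : ℕ) < l := hkl
      have e1 : (k, l) ∉ S := by
        intro hklS
        exact hS1 ((IH ((l : ℕ) - a) (by omega) a k l le_rfl hak hkl).1 hakS hklS)
      exact ((IH ((b : ℕ) - k) (by omega) k l b le_rfl hkl hlb).2 e1 hS2) hkbS
    · exact hS1 (hkl ▸ hakS)
    · have hkl' : (l : ℕ) < k := hkl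
      have e1 : (l, k) ∉ S := by
        intro hlkS
        exact hS2 ((IH ((b : ℕ) - l) (by omega) l k b le_rfl hkl hkb).1 hlkS hkbS)
      exact ((IH ((k : ℕ) - a) (by omega) a l k le_rfl hal hkl).2 hS1 e1) hakS

lemma uniq_aux {n : ℕ} (c : ℕ → ℕ) (S T : Finset (Fin n × Fin n))
    (hS1 : ∀ p ∈ S, p.1 < p.2)
    (hS2 : ∀ a : Fin n, (a : ℕ) + 1 < n →
      (S.filter (fun p => p.1 = a)).card = c ((a : ℕ) + 1))
    (hS3 : ∀ a b : Fin n, a < b →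
        ∀ m : ℕ,
          m = (S.filter (fun p => p.1 = a ∧ a < p.2 ∧ p.2 < b)).card +
              (S.filter (fun p => p.2 = b ∧ a < p.1 ∧ p.1 < b)).card →
          (((b : ℕ) - (a : ℕ) - 1 < m → (a, b) ∈ S) ∧
           (m < (b : ℕ) - (a : ℕ) - 1 → (a, b) ∉ S)))
    (hT1 : ∀ p ∈ T, p.1 < p.2)
    (hT2 : ∀ a : Fin n, (a : ℕ) + 1 < n →
      (T.filter (fun p => p.1 = a)).card = c ((a : ℕ) + 1))
    (hT3 : ∀ a b : Fin n, a < b →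
        ∀ m : ℕ,
          m = (T.filter (fun p => p.1 = a ∧ a < p.2 ∧ p.2 < b)).card +
              (T.filter (fun p => p.2 = b ∧ a < p.1 ∧ p.1 < b)).card →
          (((b : ℕ) - (a : ℕ) - 1 < m → (a, b) ∈ T) ∧
           (m < (b : ℕ) - (a : ℕ) - 1 → (a, b) ∉ T))) :
    S = T := by
  classical
  by_contra hne
  have ccS := closed_coclosed S hS3
  have ccT := closed_coclosed T hT3
  set D := univ.filter
    (fun a : Fin n => S.filter (fun p => p.1 = a) ≠ T.filter (fun p => p.1 = a)) with hD
  have hDne : D.Nonempty := by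
    by_contra hD'
    rw [Finset.not_nonempty_iff_eq_empty] at hD'
    apply hne
    ext p
    have hrow : S.filter (fun q => q.1 = p.1) = T.filter (fun q => q.1 = p.1) := by
      by_contra h
      have hmem : p.1 ∈ D := by simp [hD, h]
      rw [hD'] at hmem; exact absurd hmem (Finset.notMem_empty _)
    constructor
    · intro hp
      have h' : p ∈ S.filter (fun q => q.1 = p.1) := mem_filter.mpr ⟨hp, rfl⟩
      rw [hrow] at h'
      exact (mem_filter.mp h').1
    · intro hp
      have h' : p ∈ T.filter (fun q => q.1 = p.1) := mem_filter.mpr ⟨hp, rfl⟩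
      rw [← hrow] at h'
      exact (mem_filter.mp h').1
  set a := D.max' hDne with ha
  have haD : a ∈ D := D.max'_mem hDne
  have hrows : ∀ a' : Fin n, a < a' →
      S.filter (fun p => p.1 = a') = T.filter (fun p => p.1 = a') := by
    intro a' h
    by_contra hne'
    have hmem : a' ∈ D := by simp [hD, hne']
    exact absurd (D.le_max' a' hmem) (not_le.mpr h)
  have hmem_above : ∀ p : Fin n × Fin n, a < p.1 → (p ∈ S ↔ p ∈ T) := by
    intro p hp
    have hrow := hrows p.1 hp
    constructor
    · intro h
      have h' : p ∈ S.filter (fun q => q.1 = p.1) := mem_filter.mpr ⟨h, rfl⟩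
      rw [hrow] at h'
      exact (mem_filter.mp h').1
    · intro h
      have h' : p ∈ T.filter (fun q => q.1 = p.1) := mem_filter.mpr ⟨h, rfl⟩
      rw [← hrow] at h'
      exact (mem_filter.mp h').1
  have hDa : S.filter (fun p => p.1 = a) ≠ T.filter (fun p => p.1 = a) := by
    simpa [hD] using haD
  have hcards : (S.filter (fun p => p.1 = a)).card = (T.filter (fun p => p.1 = a)).card := by
    by_cases hn : (a : ℕ) + 1 < n
    · rw [hS2 a hn, hT2 a hn]
    · have e1 : S.filter (fun p => p.1 = a) = ∅ := by
        rw [Finset.eq_empty_iff_forall_notMem]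
        intro p hp
        obtain ⟨hpS, hpa⟩ := mem_filter.mp hp
        have h1 : (p.1 : ℕ) < p.2 := hS1 p hpS
        have h2 : (p.2 : ℕ) < n := p.2.2
        have h3 : (p.1 : ℕ) = a := by rw [hpa]
        omega
      have e2 : T.filter (fun p => p.1 = a) = ∅ := by
        rw [Finset.eq_empty_iff_forall_notMem]
        intro p hp
        obtain ⟨hpT, hpa⟩ := mem_filter.mp hp
        have h1 : (p.1 : ℕ) < p.2 := hT1 p hpT
        have h2 : (p.2 : ℕ) < n := p.2.2
        have h3 : (p.1 : ℕ) = a := by rw [hpa]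
        omega
      rw [e1, e2]
  have hbex : ∃ b, (a, b) ∈ S ∧ (a, b) ∉ T := by
    by_contra h
    push_neg at h
    apply hDa
    apply Finset.eq_of_subset_of_card_le
    · intro p hp
      obtain ⟨hpS, hpa⟩ := mem_filter.mp hp
      have hp2 : (a, p.2) ∈ S := by rw [← hpa]; exact hpS
      have := h p.2 hp2
      refine mem_filter.mpr ⟨?_, hpa⟩
      rw [← hpa] at this; exact this
    · omega
  have hb'ex : ∃ b', (a, b') ∈ T ∧ (a, b') ∉ S := by
    by_contra h
    push_neg at h
    apply hDa.symm
    apply Finset.eq_of_subset_of_card_le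
    · intro p hp
      obtain ⟨hpT, hpa⟩ := mem_filter.mp hp
      have hp2 : (a, p.2) ∈ T := by rw [← hpa]; exact hpT
      have := h p.2 hp2
      refine mem_filter.mpr ⟨?_, hpa⟩
      rw [← hpa] at this; exact this
    · omega
  obtain ⟨b, hbS, hbT⟩ := hbex
  obtain ⟨b', hb'T, hb'S⟩ := hb'ex
  have hab : a < b := hS1 (a, b) hbS
  have hab' : a < b' := hT1 (a, b') hb'T
  rcases lt_trichotomy b b' with h | h | h
  · have h1 : (b, b') ∉ S := fun hm =>
      hb'S ((ccS ((b' : ℕ) - a) a b b' le_rfl hab h).1 hbS hm)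
    have h2 : (b, b') ∈ T := by
      by_contra hm
      exact ((ccT ((b' : ℕ) - a) a b b' le_rfl hab h).2 hbT hm) hb'T
    exact h1 ((hmem_above (b, b') hab).mpr h2)
  · exact hbT (h ▸ hb'T)
  · have h1 : (b', b) ∈ S := by
      by_contra hm
      exact ((ccS ((b : ℕ) - a) a b' b le_rfl hab' h).2 hb'S hm) hbS
    have h2 : (b', b) ∉ T := fun hm =>
      hbT ((ccT ((b : ℕ) - a) a b' b le_rfl hab' h).1 hb'T hm)
    exact h2 ((hmem_above (b', b) hab').mp h1)

/-- For each vector `c = (c_1,...,c_{n-1})` of nonnegative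
integers with `c_j ≤ n - j` for all `1 ≤ j ≤ n-1`, there is exactly one subset
`S` of the pairs `{(a,b) : 1 ≤ a < b ≤ n}` (encoded as pairs of `Fin n`, with
1-based position of `i : Fin n` being `i+1`) such that for every position
`j < n` the number of pairs of `S` with first coordinate at position `j`
equals `c j`, and `S` satisfies the hook condition: for every pair `a < b`,
if more than half of the `2(b-a-1)` hook pairs of `(a,b)` belong to `S` then
`(a,b) ∈ S`, and if more than half do not belong to `S` then `(a,b) ∉ S`. -/
theorem stmt3 (n : ℕ) (c : ℕ → ℕ) (hc : ∀ j, 0 < j → j < n → c j ≤ n - j) :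
    ∃! S : Finset (Fin n × Fin n),
      (∀ p ∈ S, p.1 < p.2) ∧
      (∀ a : Fin n, (a : ℕ) + 1 < n →
        (S.filter (fun p => p.1 = a)).card = c ((a : ℕ) + 1)) ∧
      (∀ a b : Fin n, a < b →
        ∀ m : ℕ,
          m = (S.filter (fun p => p.1 = a ∧ a < p.2 ∧ p.2 < b)).card +
              (S.filter (fun p => p.2 = b ∧ a < p.1 ∧ p.1 < b)).card →
          (((b : ℕ) - (a : ℕ) - 1 < m → (a, b) ∈ S) ∧
           (m < (b : ℕ) - (a : ℕ) - 1 → (a, b) ∉ S))) := by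
  classical
  set dfun : ℕ → ℕ := fun a => if a + 1 < n then c (a + 1) else 0 with hdfun
  obtain ⟨f, hfim, hfcode⟩ := exists_code n dfun (by
    intro a ha
    by_cases h : a + 1 < n
    · have := hc (a + 1) (by omega) h
      simp only [hdfun, if_pos h]; omega
    · simp only [hdfun, if_neg h]; omega)
  set S₀ : Finset (Fin n × Fin n) :=
    univ.filter (fun p => p.1 < p.2 ∧ f p.2 < f p.1) with hS₀
  have memS₀ : ∀ p : Fin n × Fin n, p ∈ S₀ ↔ p.1 < p.2 ∧ f p.2 < f p.1 := by
    intro p; simp [hS₀]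
  have prop1 : ∀ p ∈ S₀, p.1 < p.2 := fun p hp => ((memS₀ p).mp hp).1
  have prop2 : ∀ a : Fin n, (a : ℕ) + 1 < n →
      (S₀.filter (fun p => p.1 = a)).card = c ((a : ℕ) + 1) := by
    intro a ha
    have key := hfcode (a : ℕ) (by omega)
    rw [hdfun] at key
    simp only [if_pos ha] at key
    refine Eq.trans ?_ key
    apply Finset.card_bij (fun p _ => ((p.2 : Fin n) : ℕ))
    · intro p hp
      simp only [mem_filter] at hp
      obtain ⟨hpS, hpa⟩ := hp
      rw [memS₀] at hpS
      simp only [mem_filter, mem_range]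
      refine ⟨p.2.2, ?_, ?_⟩
      · rw [← hpa]; exact hpS.1
      · rw [← hpa]; exact hpS.2
    · intro p hp p' hp' h
      simp only [mem_filter] at hp hp'
      exact Prod.ext (hp.2.trans hp'.2.symm) (Fin.val_injective h)
    · intro v hv
      simp only [mem_filter, mem_range] at hv
      obtain ⟨hv1, hv2, hv3⟩ := hv
      refine ⟨(a, ⟨v, hv1⟩), ?_, rfl⟩
      simp only [mem_filter]
      exact ⟨(memS₀ _).mpr ⟨hv2, hv3⟩, by trivial⟩
  have prop3 : ∀ a b : Fin n, a < b →
      ∀ m : ℕ,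
        m = (S₀.filter (fun p => p.1 = a ∧ a < p.2 ∧ p.2 < b)).card +
            (S₀.filter (fun p => p.2 = b ∧ a < p.1 ∧ p.1 < b)).card →
        (((b : ℕ) - (a : ℕ) - 1 < m → (a, b) ∈ S₀) ∧
         (m < (b : ℕ) - (a : ℕ) - 1 → (a, b) ∉ S₀)) := by
    intro a b hab m hm
    have hab' : (a : ℕ) < b := hab
    set Al := univ.filter (fun l : Fin n => (a, l) ∈ S₀ ∧ a < l ∧ l < b) with hAl
    set Bl := univ.filter (fun l : Fin n => (l, b) ∈ S₀ ∧ a < l ∧ l < b) with hBl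
    set Mid := univ.filter (fun k : Fin n => a < k ∧ k < b) with hMid
    have hMidcard : Mid.card = (b : ℕ) - (a : ℕ) - 1 := by
      have hmid : Mid = Finset.Ioo a b := by
        ext k; simp [hMid, Finset.mem_Ioo]
      rw [hmid, Fin.card_Ioo]
    have hm' : m = Al.card + Bl.card := by
      rw [hm, card_pair_fst S₀ a (fun l => a < l ∧ l < b),
          card_pair_snd S₀ b (fun l => a < l ∧ l < b)]
    have hAlsub : Al ⊆ Mid := by
      intro k hk
      simp only [hAl, hMid, mem_filter, mem_univ, true_and] at hk ⊢
      exact hk.2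
    have hBlsub : Bl ⊆ Mid := by
      intro k hk
      simp only [hBl, hMid, mem_filter, mem_univ, true_and] at hk ⊢
      exact hk.2
    by_cases hmem : (a, b) ∈ S₀
    · refine ⟨fun _ => hmem, ?_⟩
      intro hlt
      exfalso
      have hfba : f b < f a := ((memS₀ _).mp hmem).2
      have hsub : Mid ⊆ Al ∪ Bl := by
        intro k hk
        simp only [hMid, mem_filter, mem_univ, true_and] at hk
        rcases lt_or_ge (f k) (f a) with hfk | hfk
        · exact Finset.mem_union_left _ (by
            simp only [hAl, mem_filter, mem_univ, true_and]
            exact ⟨(memS₀ _).mpr ⟨hk.1, hfk⟩, hk⟩)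
        · exact Finset.mem_union_right _ (by
            simp only [hBl, mem_filter, mem_univ, true_and]
            exact ⟨(memS₀ _).mpr ⟨hk.2, by show f (b : ℕ) < f (k : ℕ); omega⟩, hk⟩)
      have h1 := Finset.card_le_card hsub
      have h2 := Finset.card_union_le Al Bl
      omega
    · refine ⟨?_, fun _ => hmem⟩
      intro hlt'
      exfalso
      have hfab : f a ≤ f b := by
        by_contra h
        exact hmem ((memS₀ _).mpr ⟨hab, by show f (b : ℕ) < f (a : ℕ); omega⟩)
      have hdisj : Disjoint Al Bl := by
        rw [Finset.disjoint_left]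
        intro k hk1 hk2
        simp only [hAl, mem_filter, mem_univ, true_and] at hk1
        simp only [hBl, mem_filter, mem_univ, true_and] at hk2
        have h1 : f k < f a := ((memS₀ _).mp hk1.1).2
        have h2 : f b < f k := ((memS₀ _).mp hk2.1).2
        omega
      have hcard := Finset.card_union_of_disjoint hdisj
      have hsub : Al ∪ Bl ⊆ Mid := Finset.union_subset hAlsub hBlsub
      have h1 := Finset.card_le_card hsub
      omega
  refine ⟨S₀, ⟨prop1, prop2, prop3⟩, ?_⟩
  intro T hT
  exact uniq_aux c T S₀ hT.1 hT.2.1 hT.2.2 prop1 prop2 prop3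
end

section
/- Define a PR shape as a pair of strict partitions (α^t, α^b) with α^t ⊆ (n-k) × n (a strict partition with n-k parts, largest part at most n), α^b ⊆ k × n strict, and α^t_{n-k} ≥ ℓ(α^b) + 1, where ℓ denotes the number of nonzero parts. For α^t a strict partition with α^t ⊇ (n-k, n-k-1, ..., 1), set α̃^t = α^t − (n-k, n-k-1, ..., 1). Then the map α ↦ (α̃^t)' + α^b (conjugate of α̃^t added part-wise to α^b) sends PR shapes to (n-k)-strict partitions contained in a k × (2n-k) rectangle. -/
/-- Let `(αt, αb)` be a PR shape: `αt` is a strict partition with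
`n-k` parts, each at most `n`, containing the staircase `(n-k, ..., 1)`;
`αb` is a strict partition in `k × n` (weakly decreasing, strictly decreasing
among positive parts); and `αt_{n-k} ≥ ℓ(αb) + 1` where `ℓ(αb)` is the number
of nonzero parts of `αb`.  Set `α̃t_s = αt_s - (n-k+1-s)`.  Then the partition
`γ` with `γ_i = ((α̃t)')_i + αb_i` (conjugate of `α̃t` added part-wise to `αb`)
is an `(n-k)`-strict partition contained in a `k × (2n-k)` rectangle. -/
theorem stmt4 (n k : ℕ) (hk : 0 < k) (hkn : k < n)
    (αt αb : ℕ → ℕ)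
    (hαt_strict : ∀ s, 1 ≤ s → s < n - k → αt (s + 1) < αt s)
    (hαt_le : ∀ s, 1 ≤ s → s ≤ n - k → αt s ≤ n)
    (hαt_stair : ∀ s, 1 ≤ s → s ≤ n - k → n - k + 1 - s ≤ αt s)
    (hαb_mono : ∀ i, 1 ≤ i → i < k → αb (i + 1) ≤ αb i)
    (hαb_strict : ∀ i, 1 ≤ i → i < k → 0 < αb (i + 1) → αb (i + 1) < αb i)
    (hαb_le : ∀ i, 1 ≤ i → i ≤ k → αb i ≤ n)
    (hlast : ((Finset.Icc 1 k).filter (fun i => 0 < αb i)).card + 1 ≤ αt (n - k)) :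
    ∀ γ : ℕ → ℕ,
      (∀ i, γ i = ((Finset.Icc 1 (n - k)).filter
          (fun s => i ≤ αt s - (n - k + 1 - s))).card + αb i) →
      (∀ i, 1 ≤ i → i ≤ k → γ i ≤ 2 * n - k) ∧
      (∀ i, 1 ≤ i → i < k → γ (i + 1) ≤ γ i) ∧
      (∀ i, 1 ≤ i → i < k → n - k < γ i → γ (i + 1) < γ i) := by

  intro γ hγ
  have hfle : ∀ i : ℕ, ((Finset.Icc 1 (n - k)).filter
      (fun s => i ≤ αt s - (n - k + 1 - s))).card ≤ n - k := by
    intro i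
    calc ((Finset.Icc 1 (n - k)).filter (fun s => i ≤ αt s - (n - k + 1 - s))).card
        ≤ (Finset.Icc 1 (n - k)).card := Finset.card_filter_le _ _
      _ = n - k := by simp
  have hfmono : ∀ i : ℕ, ((Finset.Icc 1 (n - k)).filter
      (fun s => i + 1 ≤ αt s - (n - k + 1 - s))).card ≤
      ((Finset.Icc 1 (n - k)).filter (fun s => i ≤ αt s - (n - k + 1 - s))).card := by
    intro i
    apply Finset.card_le_card
    intro x hx
    simp only [Finset.mem_filter] at hx ⊢
    exact ⟨hx.1, by omega⟩
  refine ⟨?_, ?_, ?_⟩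
  · intro i h1 h2
    have h3 := hαb_le i h1 h2
    have h4 := hfle i
    rw [hγ i]; omega
  · intro i h1 h2
    have h3 := hαb_mono i h1 h2
    have h4 := hfmono i
    rw [hγ i, hγ (i + 1)]; omega
  · intro i h1 h2 hlt
    rw [hγ i] at hlt
    rw [hγ i, hγ (i + 1)]
    have h3 := hfle i
    have h4 := hfmono i
    by_cases hb : 0 < αb (i + 1)
    · have h5 := hαb_strict i h1 h2 hb
      omega
    · omega
end

section
/- Let w = (y_1,...,y_{k-r}, z̄_r,...,z̄_1, v_1,...,v_{n-k}) be a signed permutation of {1,...,n} with y_1 < ... < y_{k-r}, z_r > ... > z_1, v_1 < ... < v_{n-k} (bars denoting negated entries in positions k-r+1 through k), and let α^t be the strict partition with α^t_s = n + 1 - v_s + #{ q : z_q < v_s } for 1 ≤ s ≤ n-k, and α̃^t = α^t − (n-k, ..., 1). Then for 1 ≤ i ≤ k, the length of the i-th column of α̃^t equals n-k if position k+1-i carries a barred entry, and equals #{ l : y_{k+1-i} > v_l } if position k+1-i carries the unbarred entry y_{k+1-i}. -/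
/-- Let `w = (y_1,...,y_{k-r}, z̄_r,...,z̄_1, v_1,...,v_{n-k})` be a
signed permutation of `{1,...,n}`: the values `y_1 < ... < y_{k-r}`,
`z_1 < ... < z_r` and `v_1 < ... < v_{n-k}` partition `{1,...,n}`.  Let
`αt_s = n + 1 - v_s + #{q : z_q < v_s}` and `α̃t_s = αt_s - (n-k+1-s)`.
Then for `1 ≤ i ≤ k`, the length of the `i`-th column of `α̃t`, namely
`#{s ∈ [1, n-k] : α̃t_s ≥ i}`, equals `n - k` if position `k+1-i` carries a
barred entry (i.e. `i ≤ r`), and equals `#{l : y_{k+1-i} > v_l}` if position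
`k+1-i` carries the unbarred entry `y_{k+1-i}` (i.e. `i > r`). -/
theorem stmt5 (n k r : ℕ) (hr : r ≤ k) (hk : k < n)
    (y z v : ℕ → ℕ)
    (hy : ∀ a b, 1 ≤ a → a < b → b ≤ k - r → y a < y b)
    (hz : ∀ a b, 1 ≤ a → a < b → b ≤ r → z a < z b)
    (hv : ∀ a b, 1 ≤ a → a < b → b ≤ n - k → v a < v b)
    (hcover : ((Finset.Icc 1 (k - r)).image y ∪ (Finset.Icc 1 r).image z ∪
        (Finset.Icc 1 (n - k)).image v) = Finset.Icc 1 n)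
    (hdisjYZ : Disjoint ((Finset.Icc 1 (k - r)).image y) ((Finset.Icc 1 r).image z))
    (hdisjYV : Disjoint ((Finset.Icc 1 (k - r)).image y) ((Finset.Icc 1 (n - k)).image v))
    (hdisjZV : Disjoint ((Finset.Icc 1 r).image z) ((Finset.Icc 1 (n - k)).image v))
    (i : ℕ) (hi1 : 1 ≤ i) (hik : i ≤ k) :
    ∀ αt : ℕ → ℕ,
      (∀ s, αt s = n + 1 - v s +
        ((Finset.Icc 1 r).filter (fun q => z q < v s)).card) →
      ((i ≤ r →
        ((Finset.Icc 1 (n - k)).filter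
          (fun s => i ≤ αt s - (n - k + 1 - s))).card = n - k) ∧
       (r < i →
        ((Finset.Icc 1 (n - k)).filter
          (fun s => i ≤ αt s - (n - k + 1 - s))).card =
        ((Finset.Icc 1 (n - k)).filter (fun l => v l < y (k + 1 - i))).card)) := by
  intro αt hαt
  classical
  set m := n - k with hm
  set c := k - r with hc
  -- weak monotonicity
  have hyle : ∀ a b, 1 ≤ a → a ≤ b → b ≤ c → y a ≤ y b := by
    intro a b ha hab hb
    rcases eq_or_lt_of_le hab with h | h
    · exact le_of_eq (by rw [h])
    · exact (hy a b ha h hb).le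
  have hvle : ∀ a b, 1 ≤ a → a ≤ b → b ≤ m → v a ≤ v b := by
    intro a b ha hab hb
    rcases eq_or_lt_of_le hab with h | h
    · exact le_of_eq (by rw [h])
    · exact (hv a b ha h hb).le
  -- injectivity on intervals
  have hyinj : Set.InjOn y (Finset.Icc 1 c) := by
    intro a ha b hb hab
    simp only [Finset.coe_Icc, Set.mem_Icc] at ha hb
    by_contra hne
    rcases Nat.lt_or_ge a b with h | h
    · exact absurd hab (hy a b ha.1 h hb.2).ne
    · rcases Nat.lt_or_ge b a with h' | h'
      · exact absurd hab.symm (hy b a hb.1 h' ha.2).ne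
      · omega
  have hzinj : Set.InjOn z (Finset.Icc 1 r) := by
    intro a ha b hb hab
    simp only [Finset.coe_Icc, Set.mem_Icc] at ha hb
    by_contra hne
    rcases Nat.lt_or_ge a b with h | h
    · exact absurd hab (hz a b ha.1 h hb.2).ne
    · rcases Nat.lt_or_ge b a with h' | h'
      · exact absurd hab.symm (hz b a hb.1 h' ha.2).ne
      · omega
  have hvinj : Set.InjOn v (Finset.Icc 1 m) := by
    intro a ha b hb hab
    simp only [Finset.coe_Icc, Set.mem_Icc] at ha hb
    by_contra hne
    rcases Nat.lt_or_ge a b with h | h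
    · exact absurd hab (hv a b ha.1 h hb.2).ne
    · rcases Nat.lt_or_ge b a with h' | h'
      · exact absurd hab.symm (hv b a hb.1 h' ha.2).ne
      · omega
  -- the key identity
  have key : ∀ s ∈ Finset.Icc 1 m, αt s
      = (m + 1 - s) + (r + ((Finset.Icc 1 c).filter (fun p => v s < y p)).card) := by
    intro s hs
    simp only [Finset.mem_Icc] at hs
    have hsmemV : v s ∈ (Finset.Icc 1 m).image v :=
      Finset.mem_image_of_mem v (Finset.mem_Icc.2 hs)
    have hvsn : 1 ≤ v s ∧ v s ≤ n := by
      have : v s ∈ Finset.Icc 1 n := by rw [← hcover]; exact Finset.mem_union_right _ hsmemV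
      simpa using this
    -- n + 1 - v s counts elements of [1,n] that are ≥ v s
    have h1 : ((Finset.Icc 1 n).filter (fun x => v s ≤ x)).card = n + 1 - v s := by
      have : (Finset.Icc 1 n).filter (fun x => v s ≤ x) = Finset.Icc (v s) n := by
        ext x; simp only [Finset.mem_filter, Finset.mem_Icc]; omega
      rw [this, Nat.card_Icc]
    -- split over the partition
    have h2 : ((Finset.Icc 1 n).filter (fun x => v s ≤ x)).card
        = (((Finset.Icc 1 c).image y).filter (fun x => v s ≤ x)).card
          + (((Finset.Icc 1 r).image z).filter (fun x => v s ≤ x)).card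
          + (((Finset.Icc 1 m).image v).filter (fun x => v s ≤ x)).card := by
      rw [← hcover, Finset.filter_union, Finset.filter_union,
        Finset.card_union_of_disjoint, Finset.card_union_of_disjoint]
      · exact Finset.disjoint_filter_filter hdisjYZ
      · rw [← Finset.filter_union]
        exact Finset.disjoint_filter_filter
          (Finset.disjoint_union_left.2 ⟨hdisjYV, hdisjZV⟩)
    -- Y part
    have hY : (((Finset.Icc 1 c).image y).filter (fun x => v s ≤ x)).card
        = ((Finset.Icc 1 c).filter (fun p => v s < y p)).card := by
      rw [Finset.filter_image, Finset.card_image_of_injOn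
        (hyinj.mono (by intro t ht; exact (Finset.filter_subset _ _) ht))]
      congr 1
      apply Finset.filter_congr
      intro p hp
      have hne : y p ≠ v s := by
        intro h
        exact (Finset.disjoint_left.1 hdisjYV) (Finset.mem_image_of_mem y hp) (h ▸ hsmemV)
      constructor <;> (intro h'; omega)
    -- Z part
    have hZcard : ((Finset.Icc 1 r).image z).card = r := by
      rw [Finset.card_image_of_injOn hzinj, Nat.card_Icc]; omega
    have hZ : (((Finset.Icc 1 r).image z).filter (fun x => v s ≤ x)).card
        + ((Finset.Icc 1 r).filter (fun q => z q < v s)).card = r := by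
      have hsplit := Finset.card_filter_add_card_filter_not
        (s := (Finset.Icc 1 r).image z) (fun x => v s ≤ x)
      rw [hZcard] at hsplit
      have : (((Finset.Icc 1 r).image z).filter (fun x => ¬ v s ≤ x)).card
          = ((Finset.Icc 1 r).filter (fun q => z q < v s)).card := by
        rw [Finset.filter_image, Finset.card_image_of_injOn
          (hzinj.mono (by intro t ht; exact (Finset.filter_subset _ _) ht))]
        congr 1
        apply Finset.filter_congr
        intro q hq
        constructor <;> (intro h'; omega)
      omega
    -- V part
    have hV : (((Finset.Icc 1 m).image v).filter (fun x => v s ≤ x)).card = m + 1 - s := by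
      rw [Finset.filter_image, Finset.card_image_of_injOn
        (hvinj.mono (by intro t ht; exact (Finset.filter_subset _ _) ht))]
      have : (Finset.Icc 1 m).filter (fun l => v s ≤ v l) = Finset.Icc s m := by
        ext l
        simp only [Finset.mem_filter, Finset.mem_Icc]
        constructor
        · rintro ⟨⟨hl1, hlm⟩, hvl⟩
          refine ⟨?_, hlm⟩
          by_contra h
          exact absurd hvl (not_le.2 (hv l s hl1 (by omega) hs.2))
        · rintro ⟨hsl, hlm⟩
          exact ⟨⟨by omega, hlm⟩, hvle s l hs.1 hsl hlm⟩
      rw [this, Nat.card_Icc]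
    rw [hαt s]
    omega
  -- abbreviate and finish
  constructor
  · intro hir
    rw [Finset.filter_true_of_mem, Nat.card_Icc]
    · omega
    · intro s hs
      have := key s hs
      simp only [Finset.mem_Icc] at hs
      omega
  · intro hri
    congr 1
    apply Finset.filter_congr
    intro s hs
    have hkey := key s hs
    simp only [Finset.mem_Icc] at hs
    -- reduce to: i - r ≤ card filter ↔ v s < y (k+1-i)
    have hj1 : 1 ≤ i - r := by omega
    have hjc : i - r ≤ c := by omega
    have hidx : k + 1 - i = c + 1 - (i - r) := by omega
    rw [hidx]
    constructor
    · intro h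
      have hcard : i - r ≤ ((Finset.Icc 1 c).filter (fun p => v s < y p)).card := by omega
      by_contra hle
      push_neg at hle
      have hsub : (Finset.Icc 1 c).filter (fun p => v s < y p)
          ⊆ Finset.Icc (c + 2 - (i - r)) c := by
        intro p hp
        simp only [Finset.mem_filter, Finset.mem_Icc] at hp ⊢
        refine ⟨?_, hp.1.2⟩
        by_contra hp'
        have : y p ≤ y (c + 1 - (i - r)) := hyle p _ hp.1.1 (by omega) (by omega)
        omega
      have := Finset.card_le_card hsub
      rw [Nat.card_Icc] at this
      omega
    · intro h
      have hsub : Finset.Icc (c + 1 - (i - r)) c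
          ⊆ (Finset.Icc 1 c).filter (fun p => v s < y p) := by
        intro p hp
        simp only [Finset.mem_Icc] at hp
        simp only [Finset.mem_filter, Finset.mem_Icc]
        refine ⟨⟨by omega, hp.2⟩, lt_of_lt_of_le h (hyle _ p (by omega) hp.1 hp.2)⟩
      have := Finset.card_le_card hsub
      rw [Nat.card_Icc] at this
      omega
end

section
/- Define a W-diagram for OG(k,2n+1) as a pair (λ^(1), λ^(2)) where λ^(1) is a partition in a k × (2n+1-2k) rectangle, λ^(2) is a strict partition in (k-1, k-2, ..., 1, 0), and the support condition holds: for 1 ≤ i < j ≤ k, λ^(2)_i ≥ k - j + 1 whenever λ^(1)_i + λ^(1)_j > 2n+1-2k, and λ^(2)_i ≤ k - j whenever λ^(1)_i + λ^(1)_j < 2n+1-2k. Then the map (λ^(1), λ^(2)) ↦ (λ^(1)_i + λ^(2)_i)_{1≤i≤k} is an injection from the set of W-diagrams into the set P(n-k, n) of (n-k)-strict partitions in a k × (2n-k) rectangle. -/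
/-- A W-diagram for `OG(k, 2n+1)` (encoded by its base-region partition
`l1` in a `k × (2n+1-2k)` rectangle and top-region strict partition `l2` in
`(k-1, k-2, ..., 1, 0)`, with the support condition). Indices are 1-based. -/
def IsWDiagramB (n k : ℕ) (l1 l2 : ℕ → ℕ) : Prop :=
  (∀ i, 1 ≤ i → i ≤ k → l1 i ≤ 2 * n + 1 - 2 * k) ∧
  (∀ i, 1 ≤ i → i < k → l1 (i + 1) ≤ l1 i) ∧
  (∀ i, 1 ≤ i → i ≤ k → l2 i ≤ k - i) ∧
  (∀ i, 1 ≤ i → i < k → l2 (i + 1) ≤ l2 i ∧ (0 < l2 (i + 1) → l2 (i + 1) < l2 i)) ∧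
  (∀ i j, 1 ≤ i → i < j → j ≤ k →
    (2 * n + 1 - 2 * k < l1 i + l1 j → k - j + 1 ≤ l2 i) ∧
    (l1 i + l1 j < 2 * n + 1 - 2 * k → l2 i ≤ k - j))

/-- Key asymmetric lemma: if two W-diagrams have the same image at `i`, their
base parts agree strictly above `i`, then the top part of the first cannot
exceed that of the second at `i`. -/
lemma stmt6_aux (n k : ℕ) (l1 l2 m1 m2 : ℕ → ℕ)
    (hl : IsWDiagramB n k l1 l2) (hm : IsWDiagramB n k m1 m2)
    (i : ℕ) (h1 : 1 ≤ i) (hik : i ≤ k)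
    (heq : ∀ j, i < j → j ≤ k → l1 j = m1 j)
    (hs : l1 i + l2 i = m1 i + m2 i) (hgt : m2 i < l2 i) : False := by
  obtain ⟨-, -, hc, -, he⟩ := hl
  obtain ⟨-, -, -, -, he'⟩ := hm
  have hl2le : l2 i ≤ k - i := hc i h1 hik
  set j := k + 1 - l2 i with hj
  have hij : i < j := by omega
  have hjk : j ≤ k := by omega
  have hsupp_l := (he i j h1 hij hjk).2
  have hsupp_m := (he' i j h1 hij hjk).1
  have heqj := heq j hij hjk
  have h1' : ¬ (l1 i + l1 j < 2 * n + 1 - 2 * k) := fun h => by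
    have := hsupp_l h; omega
  have h2' : ¬ (2 * n + 1 - 2 * k < m1 i + m1 j) := fun h => by
    have := hsupp_m h; omega
  omega

/-- The map `(λ^(1), λ^(2)) ↦ (λ^(1)_i + λ^(2)_i)_{1 ≤ i ≤ k}` is
an injection from the set of W-diagrams for `OG(k,2n+1)` into the set
`P(n-k, n)` of `(n-k)`-strict partitions in a `k × (2n-k)` rectangle: the
image is such a partition, and two W-diagrams with the same image agree. -/
theorem stmt6 (n k : ℕ) (hk : 0 < k) (hkn : k < n)
    (l1 l2 m1 m2 : ℕ → ℕ)
    (hl : IsWDiagramB n k l1 l2) (hm : IsWDiagramB n k m1 m2) :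
    ((∀ i, 1 ≤ i → i ≤ k → l1 i + l2 i ≤ 2 * n - k) ∧
     (∀ i, 1 ≤ i → i < k → l1 (i + 1) + l2 (i + 1) ≤ l1 i + l2 i) ∧
     (∀ i, 1 ≤ i → i < k → n - k < l1 i + l2 i →
        l1 (i + 1) + l2 (i + 1) < l1 i + l2 i)) ∧
    ((∀ i, 1 ≤ i → i ≤ k → l1 i + l2 i = m1 i + m2 i) →
      ∀ i, 1 ≤ i → i ≤ k → l1 i = m1 i ∧ l2 i = m2 i) := by
  obtain ⟨ha, hb, hc, hd, he⟩ := hl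
  constructor
  · refine ⟨?_, ?_, ?_⟩
    · intro i h1 hi
      have := ha i h1 hi
      have := hc i h1 hi
      omega
    · intro i h1 hi
      have := hb i h1 hi
      have := (hd i h1 hi).1
      omega
    · intro i h1 hi hsum
      have hmono1 := hb i h1 hi
      have hmono2 := (hd i h1 hi).1
      have hstrict := (hd i h1 hi).2
      have hsupp := (he i (i + 1) h1 (by omega) (by omega)).1
      by_contra hcon
      push_neg at hcon
      have hl1eq : l1 (i + 1) = l1 i := by omega
      have hl2eq : l2 (i + 1) = l2 i := by omega
      by_cases h2 : 0 < l2 i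
      · have := hstrict (by omega); omega
      · -- l2 i = 0, so l1 i > n - k and l1 (i+1) = l1 i
        have hN : 2 * n + 1 - 2 * k < l1 i + l1 (i + 1) := by omega
        have := hsupp hN
        omega
  · intro hsum
    have key : ∀ d i, 1 ≤ i → i ≤ k → k - i ≤ d → l1 i = m1 i ∧ l2 i = m2 i := by
      intro d
      induction d with
      | zero =>
        intro i h1 hik hdle
        have h2l := hc i h1 hik
        have h2m := hm.2.2.1 i h1 hik
        have := hsum i h1 hik
        omega
      | succ d ih =>
        intro i h1 hik hdle
        have heqj : ∀ j, i < j → j ≤ k → l1 j = m1 j := fun j hij hjk =>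
          (ih j (by omega) hjk (by omega)).1
        have hs := hsum i h1 hik
        have h2eq : l2 i = m2 i := by
          rcases lt_trichotomy (l2 i) (m2 i) with h | h | h
          · exact absurd (stmt6_aux n k m1 m2 l1 l2 hm ⟨ha, hb, hc, hd, he⟩ i h1 hik
              (fun j hij hjk => (heqj j hij hjk).symm) hs.symm h) (fun x => x)
          · exact h
          · exact absurd (stmt6_aux n k l1 l2 m1 m2 ⟨ha, hb, hc, hd, he⟩ hm i h1 hik
              heqj hs h) (fun x => x)
        exact ⟨by omega, h2eq⟩
    intro i h1 hik
    exact key k i h1 hik (by omega)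
end

section
/- Let λ = (λ^(1), λ^(2)) with λ^(1) a partition in k × (2n+1-2k), λ^(2) a strict partition in (k-1,...,1,0), satisfying the support condition. If λ^(1)_i + λ^(2)_i > n-k and λ^(1)_{i+1} + λ^(2)_{i+1} > n-k for some i, then λ^(1)_i + λ^(2)_i > λ^(1)_{i+1} + λ^(2)_{i+1}. Hence (λ^(1)_i + λ^(2)_i)_i is an (n-k)-strict partition. -/
/-- If `λ^(1)_i + λ^(2)_i > n-k` and
`λ^(1)_{i+1} + λ^(2)_{i+1} > n-k`, then
`λ^(1)_i + λ^(2)_i > λ^(1)_{i+1} + λ^(2)_{i+1}`.  Hence the sequence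
`(λ^(1)_i + λ^(2)_i)_i` is an `(n-k)`-strict partition: it is weakly
decreasing, and strictly decreasing at `i` whenever the `i`-th entry
exceeds `n - k`. -/
theorem stmt7 (n k : ℕ) (hk : 0 < k) (hkn : k < n)
    (l1 l2 : ℕ → ℕ) (h : IsWDiagramB n k l1 l2) :
    (∀ i, 1 ≤ i → i < k → n - k < l1 i + l2 i → n - k < l1 (i + 1) + l2 (i + 1) →
      l1 (i + 1) + l2 (i + 1) < l1 i + l2 i) ∧
    (∀ i, 1 ≤ i → i < k → l1 (i + 1) + l2 (i + 1) ≤ l1 i + l2 i) ∧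
    (∀ i, 1 ≤ i → i < k → n - k < l1 i + l2 i →
      l1 (i + 1) + l2 (i + 1) < l1 i + l2 i) := by
  obtain ⟨h1, h2, h3, h4, h5⟩ := h
  have key : ∀ i, 1 ≤ i → i < k → n - k < l1 i + l2 i →
      l1 (i + 1) + l2 (i + 1) < l1 i + l2 i := by
    intro i hi hik hgt
    have ha := h2 i hi hik
    have hb := h4 i hi hik
    by_cases hb' : 0 < l2 (i + 1)
    · have := hb.2 hb'; omega
    · by_cases hb0 : 0 < l2 i
      · omega
      · by_cases heq : l1 (i + 1) = l1 i
        · exfalso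
          have hs := (h5 i (i + 1) hi (by omega) (by omega)).1 (by omega)
          omega
        · omega
  refine ⟨fun i hi hik hg _ => key i hi hik hg, fun i hi hik => ?_, key⟩
  have := (h4 i hi hik).1
  have := h2 i hi hik
  omega
end

section
/- Fix n ≥ 2 and p with 1 ≤ p ≤ 2n-2. Let γ, δ be (n-2)-strict partitions in a 2 × (2n-2) rectangle with |δ| = |γ| + p, and suppose γ → δ (the Pieri relation for LG(2,2n)). If γ is not contained in δ (i.e., some box of γ is removed), then δ = (γ_1 + p + 1, γ_2 − 1). -/
/-- The boxes of a two-row Young diagram with row lengths `g1, g2`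
(box `(r,c)` in row `r ∈ {1,2}`, column `c ≥ 1`). -/
def bx (g1 g2 : ℕ) : Finset (ℕ × ℕ) :=
  ((Finset.Icc 1 g1).image fun c => (1, c)) ∪ ((Finset.Icc 1 g2).image fun c => (2, c))

/-- Box `(r,c)` is related to `(r',c')` iff `|c-(n-1)| + r = |c'-(n-1)| + r'`
(the type B/C relatedness for `LG(2,2n)`). -/
abbrev rel (n : ℕ) (b b' : ℕ × ℕ) : Prop :=
  |(b.2 : ℤ) - ((n : ℤ) - 1)| + b.1 = |(b'.2 : ℤ) - ((n : ℤ) - 1)| + b'.1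

/-- The Pieri relation `γ → δ` for `LG(2,2n)`: `δ` is obtained from `γ` by
removing a vertical strip from the first `n-2` columns (at most one box per
row, removed boxes in columns `≤ n-2`) and adding a horizontal strip (at most
one box per column, i.e. `δ_2 ≤ γ_1`), such that (1) each `γ`-box in the first
`n-2` columns having no `δ`-box below it is related to at most one
`(δ∖γ)`-box, and (2) any `(γ∖δ)`-box and the box above it are each related to
exactly one `(δ∖γ)`-box, and all these `(δ∖γ)`-boxes lie in the same row. -/
def PieriRelC (n g1 g2 d1 d2 : ℕ) : Prop :=
  g1 ≤ d1 + 1 ∧ g2 ≤ d2 + 1 ∧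
  (d1 < g1 → g1 ≤ n - 2) ∧ (d2 < g2 → g2 ≤ n - 2) ∧
  d2 ≤ g1 ∧
  (∀ b ∈ bx g1 g2, b.2 ≤ n - 2 → (b.1 + 1, b.2) ∉ bx d1 d2 →
    ((bx d1 d2 \ bx g1 g2).filter (rel n b)).card ≤ 1) ∧
  (∀ b ∈ bx g1 g2 \ bx d1 d2,
    ((bx d1 d2 \ bx g1 g2).filter (rel n b)).card = 1 ∧
    (b.1 = 2 → ((bx d1 d2 \ bx g1 g2).filter (rel n (1, b.2))).card = 1)) ∧
  (∃ ρ, ∀ b ∈ bx g1 g2 \ bx d1 d2, ∀ a ∈ bx d1 d2 \ bx g1 g2,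
    (rel n b a ∨ (b.1 = 2 ∧ rel n (1, b.2) a)) → a.1 = ρ)

lemma mem_bx {g1 g2 : ℕ} {b : ℕ × ℕ} :
    b ∈ bx g1 g2 ↔ (b.1 = 1 ∧ 1 ≤ b.2 ∧ b.2 ≤ g1) ∨ (b.1 = 2 ∧ 1 ≤ b.2 ∧ b.2 ≤ g2) := by
  rcases b with ⟨r, c⟩
  simp only [bx, Finset.mem_union, Finset.mem_image, Finset.mem_Icc, Prod.mk.injEq]
  constructor
  · rintro (⟨x, hx, h1, h2⟩ | ⟨x, hx, h1, h2⟩) <;> subst h1 <;> subst h2 <;> tauto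
  · rintro (⟨h1, h2, h3⟩ | ⟨h1, h2, h3⟩)
    · exact Or.inl ⟨c, ⟨h2, h3⟩, h1.symm, rfl⟩
    · exact Or.inr ⟨c, ⟨h2, h3⟩, h1.symm, rfl⟩

/-- Fix `n ≥ 2` and `1 ≤ p ≤ 2n-2`.  Let `γ = (g1,g2)` and
`δ = (d1,d2)` be `(n-2)`-strict partitions in a `2 × (2n-2)` rectangle with
`|δ| = |γ| + p` and `γ → δ` (the Pieri relation for `LG(2,2n)`).  If `γ` is
not contained in `δ`, then `δ = (γ_1 + p + 1, γ_2 - 1)`. -/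
theorem stmt8 (n p : ℕ) (hn : 2 ≤ n) (hp1 : 1 ≤ p) (hp2 : p ≤ 2 * n - 2)
    (g1 g2 d1 d2 : ℕ)
    (hg : g2 ≤ g1) (hg1 : g1 ≤ 2 * n - 2) (hgs : n - 2 < g1 → g2 < g1)
    (hd : d2 ≤ d1) (hd1 : d1 ≤ 2 * n - 2) (hds : n - 2 < d1 → d2 < d1)
    (hsize : d1 + d2 = g1 + g2 + p)
    (hrel : PieriRelC n g1 g2 d1 d2)
    (hnot : ¬(g1 ≤ d1 ∧ g2 ≤ d2)) :
    d1 = g1 + p + 1 ∧ d2 = g2 - 1 := by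
  obtain ⟨h1, h2, h3, h4, h5, h6, h7, h8⟩ := hrel
  by_cases hc : d2 < g2
  · omega
  · exfalso
    have hd1g : d1 < g1 := by omega
    have hg1n : g1 ≤ n - 2 := h3 hd1g
    have hb : (1, g1) ∈ bx g1 g2 \ bx d1 d2 := by
      rw [Finset.mem_sdiff, mem_bx, mem_bx]
      show ((1 = 1 ∧ 1 ≤ g1 ∧ g1 ≤ g1) ∨ (1 = 2 ∧ 1 ≤ g1 ∧ g1 ≤ g2)) ∧
        ¬((1 = 1 ∧ 1 ≤ g1 ∧ g1 ≤ d1) ∨ (1 = 2 ∧ 1 ≤ g1 ∧ g1 ≤ d2))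
      omega
    have hcard := (h7 _ hb).1
    have hemp : (bx d1 d2 \ bx g1 g2).filter (rel n (1, g1)) = ∅ := by
      rw [Finset.filter_eq_empty_iff]
      intro a ha hr
      rw [Finset.mem_sdiff, mem_bx, mem_bx] at ha
      obtain ⟨haD, haG⟩ := ha
      have ha2 : a.1 = 2 ∧ g2 < a.2 ∧ a.2 ≤ d2 := by omega
      unfold rel at hr
      have e1 : |(a.2 : ℤ) - ((n : ℤ) - 1)| = ((n : ℤ) - 1) - a.2 := by
        rw [abs_of_nonpos (by omega)]; ring
      have e2 : |(g1 : ℤ) - ((n : ℤ) - 1)| = ((n : ℤ) - 1) - g1 := by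
        rw [abs_of_nonpos (by omega)]; ring
      rw [e1, e2] at hr
      omega
    rw [hemp] at hcard
    simp at hcard
end

section
/- Fix n ≥ 2 and p with 1 ≤ p ≤ 2n-2. Let γ be an (n-2)-strict partition in a 2 × (2n-2) rectangle with |γ| ≤ 2n-3 and p + |γ| > 2n-3, and suppose γ* = (γ_1 + p + 1, γ_2 − 1) is also an (n-2)-strict partition in the 2 × (2n-2) rectangle. Then γ → γ* under the Pieri relation for LG(2,2n). -/
/-- Fix `n ≥ 2` and `1 ≤ p ≤ 2n-2`.  Let `γ = (g1,g2)` be an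
`(n-2)`-strict partition in a `2 × (2n-2)` rectangle with `|γ| ≤ 2n-3` and
`p + |γ| > 2n-3`, and suppose `γ* = (γ_1 + p + 1, γ_2 - 1)` is also an
`(n-2)`-strict partition in the `2 × (2n-2)` rectangle (in particular
`γ_2 ≥ 1`).  Then `γ → γ*` under the Pieri relation for `LG(2,2n)`. -/
theorem stmt9 (n p : ℕ) (hn : 2 ≤ n) (hp1 : 1 ≤ p) (hp2 : p ≤ 2 * n - 2)
    (g1 g2 : ℕ)
    (hg : g2 ≤ g1) (hg1 : g1 ≤ 2 * n - 2) (hgs : n - 2 < g1 → g2 < g1)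
    (hsize1 : g1 + g2 ≤ 2 * n - 3) (hsize2 : 2 * n - 3 < p + (g1 + g2))
    (hg2pos : 1 ≤ g2)
    (hstar1 : g1 + p + 1 ≤ 2 * n - 2)
    (hstar2 : g2 - 1 ≤ g1 + p + 1)
    (hstars : n - 2 < g1 + p + 1 → g2 - 1 < g1 + p + 1) :
    PieriRelC n g1 g2 (g1 + p + 1) (g2 - 1) := by
  have hg2n : g2 ≤ n - 2 := by omega
  -- characterization of the added boxes
  have hD : ∀ a : ℕ × ℕ, a ∈ bx (g1 + p + 1) (g2 - 1) \ bx g1 g2 ↔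
      a.1 = 1 ∧ g1 + 1 ≤ a.2 ∧ a.2 ≤ g1 + p + 1 := by
    intro a
    simp only [Finset.mem_sdiff, mem_bx]
    omega
  -- characterization of the removed boxes
  have hB : ∀ b : ℕ × ℕ, b ∈ bx g1 g2 \ bx (g1 + p + 1) (g2 - 1) ↔
      b.1 = 2 ∧ b.2 = g2 := by
    intro b
    simp only [Finset.mem_sdiff, mem_bx]
    omega
  refine ⟨by omega, by omega, by omega, fun _ => hg2n, by omega, ?_, ?_, ?_⟩
  · -- condition (1)
    intro b hb hbn _
    rw [Finset.card_le_one]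
    intro a ha a' ha'
    rw [Finset.mem_filter] at ha ha'
    obtain ⟨ha1, ha2⟩ := ha
    obtain ⟨ha'1, ha'2⟩ := ha'
    rw [hD] at ha1 ha'1
    rw [mem_bx] at hb
    unfold rel at ha2 ha'2
    rcases abs_cases ((b.2 : ℤ) - ((n : ℤ) - 1)) with ⟨h1, h1'⟩ | ⟨h1, h1'⟩ <;>
      rw [h1] at ha2 ha'2 <;>
      rcases abs_cases ((a.2 : ℤ) - ((n : ℤ) - 1)) with ⟨h2, h2'⟩ | ⟨h2, h2'⟩ <;>
      rw [h2] at ha2 <;>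
      rcases abs_cases ((a'.2 : ℤ) - ((n : ℤ) - 1)) with ⟨h3, h3'⟩ | ⟨h3, h3'⟩ <;>
      rw [h3] at ha'2 <;>
      exact Prod.ext (by omega) (by omega)
  · -- condition (2)
    intro b hb
    rw [hB] at hb
    obtain ⟨hb1, hb2⟩ := hb
    constructor
    · have : (bx (g1 + p + 1) (g2 - 1) \ bx g1 g2).filter (rel n b)
          = {(1, 2 * n - 1 - g2)} := by
        ext a
        rw [Finset.mem_filter, hD, Finset.mem_singleton]
        unfold rel
        rw [hb1, hb2]
        constructor
        · rintro ⟨⟨ha1, ha2, ha3⟩, hrel⟩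
          rcases abs_cases ((g2 : ℤ) - ((n : ℤ) - 1)) with ⟨h1, h1'⟩ | ⟨h1, h1'⟩ <;>
            rw [h1] at hrel <;>
            rcases abs_cases ((a.2 : ℤ) - ((n : ℤ) - 1)) with ⟨h2, h2'⟩ | ⟨h2, h2'⟩ <;>
            rw [h2] at hrel <;>
            exact Prod.ext (by omega) (by omega)
        · rintro rfl
          refine ⟨⟨rfl, by omega, by omega⟩, ?_⟩
          rcases abs_cases ((g2 : ℤ) - ((n : ℤ) - 1)) with ⟨h1, h1'⟩ | ⟨h1, h1'⟩ <;>
            rw [h1] <;>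
            rcases abs_cases (((2 * n - 1 - g2 : ℕ) : ℤ) - ((n : ℤ) - 1)) with ⟨h2, h2'⟩ | ⟨h2, h2'⟩ <;>
            rw [h2] <;> omega
      rw [this, Finset.card_singleton]
    · intro _
      have : (bx (g1 + p + 1) (g2 - 1) \ bx g1 g2).filter (rel n (1, b.2))
          = {(1, 2 * n - 2 - g2)} := by
        ext a
        rw [Finset.mem_filter, hD, Finset.mem_singleton]
        unfold rel
        rw [hb2]
        constructor
        · rintro ⟨⟨ha1, ha2, ha3⟩, hrel⟩
          rcases abs_cases ((g2 : ℤ) - ((n : ℤ) - 1)) with ⟨h1, h1'⟩ | ⟨h1, h1'⟩ <;>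
            rw [h1] at hrel <;>
            rcases abs_cases ((a.2 : ℤ) - ((n : ℤ) - 1)) with ⟨h2, h2'⟩ | ⟨h2, h2'⟩ <;>
            rw [h2] at hrel <;>
            exact Prod.ext (by omega) (by omega)
        · rintro rfl
          refine ⟨⟨rfl, by omega, by omega⟩, ?_⟩
          rcases abs_cases ((g2 : ℤ) - ((n : ℤ) - 1)) with ⟨h1, h1'⟩ | ⟨h1, h1'⟩ <;>
            rw [h1] <;>
            rcases abs_cases (((2 * n - 2 - g2 : ℕ) : ℤ) - ((n : ℤ) - 1)) with ⟨h2, h2'⟩ | ⟨h2, h2'⟩ <;>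
            rw [h2] <;> omega
      rw [this, Finset.card_singleton]
  · -- condition (3)
    exact ⟨1, fun b _ a ha _ => ((hD a).mp ha).1⟩
end

section
/- Fix n ≥ 2 and p with 1 ≤ p ≤ 2n-2. Let γ, δ be (n-2)-strict partitions in a 2 × (2n-2) rectangle with |δ| = |γ| + p and γ → δ. If |δ| ≤ 2n-3 or |γ| > 2n-3, then γ ⊆ δ (no box of γ is removed in passing to δ). -/
lemma mem_bx_iff {g1 g2 : ℕ} {a : ℕ × ℕ} :
    a ∈ bx g1 g2 ↔ (a.1 = 1 ∧ 1 ≤ a.2 ∧ a.2 ≤ g1) ∨ (a.1 = 2 ∧ 1 ≤ a.2 ∧ a.2 ≤ g2) := by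
  obtain ⟨r, c⟩ := a
  simp only [bx, Finset.mem_union, Finset.mem_image, Finset.mem_Icc, Prod.mk.injEq]
  constructor
  · rintro (⟨x, hx, h1, h2⟩ | ⟨x, hx, h1, h2⟩) <;> subst h1 <;> subst h2 <;> simp_all
  · rintro (⟨h1, h2, h3⟩ | ⟨h1, h2, h3⟩)
    · exact Or.inl ⟨c, ⟨h2, h3⟩, h1.symm, rfl⟩
    · exact Or.inr ⟨c, ⟨h2, h3⟩, h1.symm, rfl⟩

lemma extract_rel (n : ℕ) (S : Finset (ℕ × ℕ)) (b : ℕ × ℕ)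
    (h : (S.filter (rel n b)).card = 1) : ∃ a ∈ S, rel n b a := by
  have hne : (S.filter (rel n b)).Nonempty := Finset.card_pos.mp (by omega)
  obtain ⟨a, ha⟩ := hne
  rw [Finset.mem_filter] at ha
  exact ⟨a, ha.1, ha.2⟩

set_option maxHeartbeats 2000000 in
/-- Fix `n ≥ 2` and `1 ≤ p ≤ 2n-2`.  Let `γ, δ` be `(n-2)`-strict
partitions in a `2 × (2n-2)` rectangle with `|δ| = |γ| + p` and `γ → δ`.
If `|δ| ≤ 2n-3` or `|γ| > 2n-3`, then `γ ⊆ δ`. -/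
theorem stmt10 (n p : ℕ) (hn : 2 ≤ n) (hp1 : 1 ≤ p) (hp2 : p ≤ 2 * n - 2)
    (g1 g2 d1 d2 : ℕ)
    (hg : g2 ≤ g1) (hg1 : g1 ≤ 2 * n - 2) (hgs : n - 2 < g1 → g2 < g1)
    (hd : d2 ≤ d1) (hd1 : d1 ≤ 2 * n - 2) (hds : n - 2 < d1 → d2 < d1)
    (hsize : d1 + d2 = g1 + g2 + p)
    (hrel : PieriRelC n g1 g2 d1 d2)
    (hcase : d1 + d2 ≤ 2 * n - 3 ∨ 2 * n - 3 < g1 + g2) :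
    g1 ≤ d1 ∧ g2 ≤ d2 := by
  obtain ⟨h1, h2, h3, h4, h5, h6, h7, h8⟩ := hrel
  -- First: g1 ≤ d1
  have hA : g1 ≤ d1 := by
    by_contra hA
    push_neg at hA
    have hg1n : g1 ≤ n - 2 := h3 hA
    have hb : (1, g1) ∈ bx g1 g2 \ bx d1 d2 := by
      rw [Finset.mem_sdiff, mem_bx_iff, mem_bx_iff]
      refine ⟨Or.inl ⟨rfl, by omega, le_refl _⟩, ?_⟩
      rintro (⟨_, _, h⟩ | ⟨h, _, _⟩) <;> simp_all <;> omega
    obtain ⟨hcard, -⟩ := h7 _ hb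
    obtain ⟨a, haS, hrel'⟩ := extract_rel n _ _ hcard
    rw [Finset.mem_sdiff, mem_bx_iff, mem_bx_iff] at haS
    obtain ⟨hin, hout⟩ := haS
    push_neg at hout
    simp only [rel] at hrel'
    rcases hin with ⟨ha1, ha2, ha3⟩ | ⟨ha1, ha2, ha3⟩
    · -- row 1 of δ shorter than γ's: impossible
      have := hout.1 ha1 ha2; omega
    · -- row 2: column ≤ d2 ≤ g1, but relatedness forces column g1+1
      have hcg : g2 < a.2 := by
        rcases Nat.lt_or_ge g2 a.2 with h | h
        · exact h
        · exact absurd (hout.2 ha1 ha2) (by omega)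
      rw [ha1] at hrel'
      rcases abs_cases ((g1 : ℤ) - ((n : ℤ) - 1)) with ⟨e1, _⟩ | ⟨e1, _⟩ <;>
      rcases abs_cases ((a.2 : ℤ) - ((n : ℤ) - 1)) with ⟨e2, _⟩ | ⟨e2, _⟩ <;>
        rw [e1, e2] at hrel' <;> omega
  refine ⟨hA, ?_⟩
  -- Second: g2 ≤ d2
  by_contra hB
  push_neg at hB
  have hg2n : g2 ≤ n - 2 := h4 hB
  have hb : (2, g2) ∈ bx g1 g2 \ bx d1 d2 := by
    rw [Finset.mem_sdiff, mem_bx_iff, mem_bx_iff]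
    refine ⟨Or.inr ⟨rfl, by omega, le_refl _⟩, ?_⟩
    rintro (⟨h, _, _⟩ | ⟨_, _, h⟩) <;> simp_all <;> omega
  obtain ⟨hcard1, hcard2⟩ := h7 _ hb
  have hcard2 := hcard2 rfl
  rcases hcase with hc | hc
  · -- |δ| ≤ 2n-3 : use box (2, g2)
    obtain ⟨a, haS, hrel'⟩ := extract_rel n _ _ hcard1
    rw [Finset.mem_sdiff, mem_bx_iff, mem_bx_iff] at haS
    obtain ⟨hin, hout⟩ := haS
    push_neg at hout
    simp only [rel] at hrel'
    rcases hin with ⟨ha1, ha2, ha3⟩ | ⟨ha1, ha2, ha3⟩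
    · have hcg : g1 < a.2 := by
        rcases Nat.lt_or_ge g1 a.2 with h | h
        · exact h
        · exact absurd (hout.1 ha1 ha2) (by omega)
      rw [ha1] at hrel'
      rcases abs_cases ((g2 : ℤ) - ((n : ℤ) - 1)) with ⟨e1, _⟩ | ⟨e1, _⟩ <;>
      rcases abs_cases ((a.2 : ℤ) - ((n : ℤ) - 1)) with ⟨e2, _⟩ | ⟨e2, _⟩ <;>
        rw [e1, e2] at hrel' <;> omega
    · have := hout.2 ha1 ha2; omega
  · -- |γ| > 2n-3 : use box (1, g2)
    obtain ⟨a, haS, hrel'⟩ := extract_rel n _ _ hcard2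
    rw [Finset.mem_sdiff, mem_bx_iff, mem_bx_iff] at haS
    obtain ⟨hin, hout⟩ := haS
    push_neg at hout
    simp only [rel] at hrel'
    rcases hin with ⟨ha1, ha2, ha3⟩ | ⟨ha1, ha2, ha3⟩
    · have hcg : g1 < a.2 := by
        rcases Nat.lt_or_ge g1 a.2 with h | h
        · exact h
        · exact absurd (hout.1 ha1 ha2) (by omega)
      rw [ha1] at hrel'
      rcases abs_cases ((g2 : ℤ) - ((n : ℤ) - 1)) with ⟨e1, _⟩ | ⟨e1, _⟩ <;>
      rcases abs_cases ((a.2 : ℤ) - ((n : ℤ) - 1)) with ⟨e2, _⟩ | ⟨e2, _⟩ <;>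
        rw [e1, e2] at hrel' <;> omega
    · have := hout.2 ha1 ha2; omega
end

section
/- In the Pieri relation setup for LG(2,2n), suppose γ → δ with γ ⊆ δ, and let D_1 = {(1,c) : max(γ_1, n-2) < c ≤ δ_1} be the set of added boxes in row 1 lying in the last n columns. Then a box (1,c) ∈ D_1 with c ≠ n-1 is killed by a row-1 γ-box of the first n-2 columns (type S) if and only if 2n-2-γ_1 ≤ c ≤ 2n-3-δ_2, and is killed by a row-2 γ-box (type T) if and only if 2n-1-γ_2 ≤ c ≤ 2n-2; the box (1, n-1) is never killed. In particular, if (1, 2n-2-δ_2) ∈ D_1 then it is not killed. -/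
lemma rel_row1 (n c c' : ℕ) (hn : 2 ≤ n) (hc : n - 1 ≤ c) (hc' : c' ≤ n - 2) :
    rel n (1, c) (1, c') ↔ c + c' + 2 = 2 * n := by
  simp only [rel]
  rw [abs_of_nonneg (by omega : (0:ℤ) ≤ (c:ℤ) - ((n:ℤ) - 1)),
    abs_of_nonpos (by omega : ((c':ℤ) - ((n:ℤ) - 1)) ≤ 0)]
  omega

lemma rel_row12 (n c c' : ℕ) (hn : 2 ≤ n) (hc : n - 1 ≤ c) (hc' : c' ≤ n - 2) :
    rel n (1, c) (2, c') ↔ c + c' + 1 = 2 * n := by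
  simp only [rel]
  rw [abs_of_nonneg (by omega : (0:ℤ) ≤ (c:ℤ) - ((n:ℤ) - 1)),
    abs_of_nonpos (by omega : ((c':ℤ) - ((n:ℤ) - 1)) ≤ 0)]
  omega

/-- Suppose `γ → δ` with `γ ⊆ δ` (Pieri relation for `LG(2,2n)`),
and let `D_1 = {(1,c) : max(γ_1, n-2) < c ≤ δ_1}` be the added row-1 boxes in
the last `n` columns.  A box `(1,c)` is "killed by `S`" if it is related to a
box of `S = {(1,c') : δ_2 + 1 ≤ c' ≤ γ_1, c' ≤ n-2}`, and "killed by `T`" if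
it is related to a box of `T = {(2,c') : 1 ≤ c' ≤ γ_2, c' ≤ n-2}`.  Then for
`(1,c) ∈ D_1` with `c ≠ n-1`:  it is killed by `S` iff
`2n-2-γ_1 ≤ c ≤ 2n-3-δ_2` (written additively), and killed by `T` iff
`2n-1-γ_2 ≤ c ≤ 2n-2`; the box `(1, n-1)` is never killed; and in particular
if `c = 2n-2-δ_2` then `(1,c)` is not killed. -/
theorem stmt11 (n p : ℕ) (hn : 2 ≤ n) (hp1 : 1 ≤ p) (hp2 : p ≤ 2 * n - 2)
    (g1 g2 d1 d2 : ℕ)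
    (hg : g2 ≤ g1) (hg1 : g1 ≤ 2 * n - 2) (hgs : n - 2 < g1 → g2 < g1)
    (hd : d2 ≤ d1) (hd1 : d1 ≤ 2 * n - 2) (hds : n - 2 < d1 → d2 < d1)
    (hsize : d1 + d2 = g1 + g2 + p)
    (hrel : PieriRelC n g1 g2 d1 d2)
    (hsub : g1 ≤ d1 ∧ g2 ≤ d2)
    (c : ℕ) (hcD1 : g1 < c ∧ n - 2 < c ∧ c ≤ d1) :
    (c ≠ n - 1 →
      (((∃ c', d2 + 1 ≤ c' ∧ c' ≤ g1 ∧ c' ≤ n - 2 ∧ rel n (1, c) (1, c')) ↔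
          (2 * n - 2 ≤ c + g1 ∧ c + d2 + 3 ≤ 2 * n)) ∧
       ((∃ c', 1 ≤ c' ∧ c' ≤ g2 ∧ c' ≤ n - 2 ∧ rel n (1, c) (2, c')) ↔
          (2 * n - 1 ≤ c + g2 ∧ c ≤ 2 * n - 2)))) ∧
    (c = n - 1 →
      ¬(∃ c', d2 + 1 ≤ c' ∧ c' ≤ g1 ∧ c' ≤ n - 2 ∧ rel n (1, c) (1, c')) ∧
      ¬(∃ c', 1 ≤ c' ∧ c' ≤ g2 ∧ c' ≤ n - 2 ∧ rel n (1, c) (2, c'))) ∧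
    (c + d2 = 2 * n - 2 →
      ¬(∃ c', d2 + 1 ≤ c' ∧ c' ≤ g1 ∧ c' ≤ n - 2 ∧ rel n (1, c) (1, c')) ∧
      ¬(∃ c', 1 ≤ c' ∧ c' ≤ g2 ∧ c' ≤ n - 2 ∧ rel n (1, c) (2, c'))) := by
  obtain ⟨hc1, hc2, hc3⟩ := hcD1
  have hcn : n - 1 ≤ c := by omega
  refine ⟨?_, ?_, ?_⟩
  · intro hne
    constructor
    · constructor
      · rintro ⟨c', h1, h2, h3, hr⟩
        rw [rel_row1 n c c' hn hcn h3] at hr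
        omega
      · rintro ⟨h1, h2⟩
        refine ⟨2 * n - 2 - c, by omega, by omega, by omega, ?_⟩
        rw [rel_row1 n c _ hn hcn (by omega)]
        omega
    · constructor
      · rintro ⟨c', h1, h2, h3, hr⟩
        rw [rel_row12 n c c' hn hcn h3] at hr
        omega
      · rintro ⟨h1, h2⟩
        have hcn1 : n + 1 ≤ c := by
          rcases Nat.lt_or_ge (n - 2) g1 with h | h
          · have := hgs h; omega
          · omega
        refine ⟨2 * n - 1 - c, by omega, by omega, by omega, ?_⟩
        rw [rel_row12 n c _ hn hcn (by omega)]
        omega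
  · intro hceq
    constructor
    · rintro ⟨c', h1, h2, h3, hr⟩
      rw [rel_row1 n c c' hn hcn h3] at hr
      omega
    · rintro ⟨c', h1, h2, h3, hr⟩
      rw [rel_row12 n c c' hn hcn h3] at hr
      omega
  · intro hceq
    constructor
    · rintro ⟨c', h1, h2, h3, hr⟩
      rw [rel_row1 n c c' hn hcn h3] at hr
      omega
    · rintro ⟨c', h1, h2, h3, hr⟩
      rw [rel_row12 n c c' hn hcn h3] at hr
      have := hsub.2
      omega
end

section
/- In the Pieri relation for LG(2,2n) with γ → δ, γ ⊆ δ, |γ| ≤ 2n-3, |δ| > 2n-3, γ_1 ≥ n-1, and D_1 nonempty (where D_1 is the set of added row-1 boxes in columns n-1 through 2n-2), not every box of D_1 is killed. Explicitly: with S'_1 = {(1,c) : 2n-2-γ_1 ≤ c ≤ 2n-3-δ_2} and T'_1 = {(1,c) : 2n-1-γ_2 ≤ c ≤ 2n-2}, the set D_1 ∖ (S'_1 ∪ T'_1) is nonempty. -/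
/-- In the Pieri relation for `LG(2,2n)` with `γ → δ`, `γ ⊆ δ`,
`|γ| ≤ 2n-3`, `|δ| > 2n-3`, `γ_1 ≥ n-1` and `D_1` nonempty (where
`D_1 = {(1,c) : max(γ_1, n-2) < c ≤ δ_1}`), not every box of `D_1` is killed:
with `S'_1 = {(1,c) : 2n-2-γ_1 ≤ c ≤ 2n-3-δ_2}` and
`T'_1 = {(1,c) : 2n-1-γ_2 ≤ c ≤ 2n-2}` (intervals written additively),
the set `D_1 ∖ (S'_1 ∪ T'_1)` is nonempty. -/
theorem stmt12 (n p : ℕ) (hn : 2 ≤ n) (hp1 : 1 ≤ p) (hp2 : p ≤ 2 * n - 2)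
    (g1 g2 d1 d2 : ℕ)
    (hg : g2 ≤ g1) (hg1 : g1 ≤ 2 * n - 2) (hgs : n - 2 < g1 → g2 < g1)
    (hd : d2 ≤ d1) (hd1 : d1 ≤ 2 * n - 2) (hds : n - 2 < d1 → d2 < d1)
    (hsize : d1 + d2 = g1 + g2 + p)
    (hrel : PieriRelC n g1 g2 d1 d2)
    (hsub : g1 ≤ d1 ∧ g2 ≤ d2)
    (hγ : g1 + g2 ≤ 2 * n - 3) (hδ : 2 * n - 3 < d1 + d2)
    (hg1big : n - 1 ≤ g1)
    (hD1 : ∃ c, max g1 (n - 2) < c ∧ c ≤ d1) :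
    ∃ c, (max g1 (n - 2) < c ∧ c ≤ d1) ∧
      ¬(2 * n - 2 ≤ c + g1 ∧ c + d2 + 3 ≤ 2 * n) ∧
      ¬(2 * n - 1 ≤ c + g2 ∧ c ≤ 2 * n - 2) := by
  obtain ⟨c0, hc1, hc2⟩ := hD1
  rcases le_or_gt (d1 + g2) (2 * n - 3) with h | h
  · exact ⟨d1, by omega, by omega, by omega⟩
  · exact ⟨2 * n - 2 - g2, by omega, by omega, by omega⟩
end

section
/- The map f sending ⟨λ|∘⟩ to (λ_1, λ_2) and ⟨λ|•⟩ to (λ_1+1, λ_2) is a bijection from the set of RYDs for LG(2,2n), namely pairs (λ, ε) with λ ⊆ 2 × (2n-3), ε ∈ {•,∘}, satisfying: ε = • if λ_1 + λ_2 > 2n-3, and ε = ∘ if λ_1 + λ_2 < 2n-3, onto the set P(n-2, n) of (n-2)-strict partitions in a 2 × (2n-2) rectangle. -/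
/-- The map `f` sending `⟨λ|∘⟩` to `(λ_1, λ_2)` and `⟨λ|•⟩` to
`(λ_1 + 1, λ_2)` is a bijection from the set of RYDs for `LG(2,2n)` — triples
`(λ_1, λ_2, ε)` with `λ = (λ_1 ≥ λ_2)` a partition in a `2 × (2n-3)` rectangle
and `ε ∈ {•,∘}` (encoded as `Bool`, `true = •`), where `ε = •` is forced when
`λ_1 + λ_2 > 2n-3` and `ε = ∘` is forced when `λ_1 + λ_2 < 2n-3` — onto the
set `P(n-2,n)` of `(n-2)`-strict partitions in a `2 × (2n-2)` rectangle. -/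
theorem stmt14 (n : ℕ) (hn : 2 ≤ n) :
    Set.BijOn
      (fun t : ℕ × ℕ × Bool => if t.2.2 then (t.1 + 1, t.2.1) else (t.1, t.2.1))
      {t : ℕ × ℕ × Bool |
        t.2.1 ≤ t.1 ∧ t.1 ≤ 2 * n - 3 ∧
        (2 * n - 3 < t.1 + t.2.1 → t.2.2 = true) ∧
        (t.1 + t.2.1 < 2 * n - 3 → t.2.2 = false)}
      {g : ℕ × ℕ | g.2 ≤ g.1 ∧ g.1 ≤ 2 * n - 2 ∧ (n - 2 < g.1 → g.2 < g.1)} := by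
  refine ⟨?_, ?_, ?_⟩
  · rintro ⟨a, b, e⟩ ⟨h1, h2, h3, h4⟩
    simp only [Set.mem_setOf_eq] at h1 h2 h3 h4
    cases e with
    | false =>
      have hs : ¬ (2 * n - 3 < a + b) := fun h => by simpa using h3 h
      show (b ≤ a ∧ a ≤ 2 * n - 2 ∧ (n - 2 < a → b < a))
      exact ⟨h1, by omega, fun h => by omega⟩
    | true =>
      have hs : ¬ (a + b < 2 * n - 3) := fun h => by simpa using h4 h
      show (b ≤ a + 1 ∧ a + 1 ≤ 2 * n - 2 ∧ (n - 2 < a + 1 → b < a + 1))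
      exact ⟨by omega, by omega, fun h => by omega⟩
  · rintro ⟨a, b, e⟩ ⟨h1, h2, h3, h4⟩ ⟨a', b', e'⟩ ⟨h1', h2', h3', h4'⟩ heq
    simp only [Set.mem_setOf_eq] at h1 h2 h3 h4 h1' h2' h3' h4'
    cases e <;> cases e'
    · have heq' : (a, b) = (a', b') := heq
      obtain ⟨rfl, rfl⟩ := Prod.mk.injEq .. ▸ heq'
      rfl
    · exfalso
      have heq' : (a, b) = (a' + 1, b') := heq
      obtain ⟨ha, hb⟩ := Prod.mk.injEq .. ▸ heq'
      have hs : ¬ (2 * n - 3 < a + b) := fun h => by simpa using h3 h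
      have hs' : ¬ (a' + b' < 2 * n - 3) := fun h => by simpa using h4' h
      omega
    · exfalso
      have heq' : (a + 1, b) = (a', b') := heq
      obtain ⟨ha, hb⟩ := Prod.mk.injEq .. ▸ heq'
      have hs : ¬ (a + b < 2 * n - 3) := fun h => by simpa using h4 h
      have hs' : ¬ (2 * n - 3 < a' + b') := fun h => by simpa using h3' h
      omega
    · have heq' : (a + 1, b) = (a' + 1, b') := heq
      obtain ⟨ha, hb⟩ := Prod.mk.injEq .. ▸ heq'
      have : a = a' := by omega
      subst this; subst hb; rfl
  · rintro ⟨c, d⟩ ⟨h1, h2, h3⟩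
    simp only [Set.mem_setOf_eq] at h1 h2 h3
    by_cases hc : c + d ≤ 2 * n - 3
    · refine ⟨(c, d, false), ?_, rfl⟩
      show d ≤ c ∧ c ≤ 2 * n - 3 ∧ (2 * n - 3 < c + d → (false : Bool) = true) ∧
        (c + d < 2 * n - 3 → (false : Bool) = false)
      exact ⟨h1, by omega, fun h => absurd h (by omega), fun _ => rfl⟩
    · have hdc : d < c := by
        rcases Nat.lt_or_ge (n - 2) c with h | h
        · exact h3 h
        · omega
      refine ⟨(c - 1, d, true), ?_, ?_⟩
      · show d ≤ c - 1 ∧ c - 1 ≤ 2 * n - 3 ∧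
          (2 * n - 3 < c - 1 + d → (true : Bool) = true) ∧
          (c - 1 + d < 2 * n - 3 → (true : Bool) = false)
        exact ⟨by omega, by omega, fun _ => rfl, fun h => absurd h (by omega)⟩
      · show ((c - 1 + 1 : ℕ), d) = (c, d)
        have : c - 1 + 1 = c := by omega
        rw [this]
end

section
/- Let λ = (λ^(1), λ^(2)) be a W-diagram for OG(k,2n) (type D support condition). Then λ^(1) has a part equal to n-k if and only if the partition γ = (λ^(1)_i + λ^(2)_i)_{1≤i≤k} has a part equal to n-k. -/
/-- A W-diagram for `OG(k, 2n)` (type D): `l1` a partition in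
`k × (2n-2k)`, `l2` a strict partition in `(k-1, ..., 1, 0)`, with the
type D support condition. Indices are 1-based. -/
def IsWDiagramD (n k : ℕ) (l1 l2 : ℕ → ℕ) : Prop :=
  (∀ i, 1 ≤ i → i ≤ k → l1 i ≤ 2 * n - 2 * k) ∧
  (∀ i, 1 ≤ i → i < k → l1 (i + 1) ≤ l1 i) ∧
  (∀ i, 1 ≤ i → i ≤ k → l2 i ≤ k - i) ∧
  (∀ i, 1 ≤ i → i < k → l2 (i + 1) ≤ l2 i ∧ (0 < l2 (i + 1) → l2 (i + 1) < l2 i)) ∧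
  (∀ i j, 1 ≤ i → i < j → j ≤ k →
    (2 * n - 2 * k < l1 i + l1 j → k - j + 1 ≤ l2 i) ∧
    (l1 i + l1 j < 2 * n - 2 * k → l2 i ≤ k - j))

/-- Let `λ = (λ^(1), λ^(2))` be a W-diagram for `OG(k,2n)`.
Then `λ^(1)` has a part equal to `n-k` if and only if the partition
`γ = (λ^(1)_i + λ^(2)_i)_{1≤i≤k}` has a part equal to `n-k`. -/
theorem stmt19 (n k : ℕ) (hk : 0 < k) (hkn : k < n)
    (l1 l2 : ℕ → ℕ) (h : IsWDiagramD n k l1 l2) :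
    (∃ i, 1 ≤ i ∧ i ≤ k ∧ l1 i = n - k) ↔
    (∃ i, 1 ≤ i ∧ i ≤ k ∧ l1 i + l2 i = n - k) := by
  obtain ⟨h1, h2, h3, h4, h5⟩ := h
  have mono : ∀ i j, 1 ≤ i → i ≤ j → j ≤ k → l1 j ≤ l1 i := by
    intro i j hi hij hjk
    induction j with
    | zero => omega
    | succ t ih =>
      rcases Nat.eq_or_lt_of_le hij with he | hl
      · rw [he]
      · exact le_trans (h2 t (by omega) (by omega)) (ih (by omega) (by omega))
  have hl2k : l2 k = 0 := by have := h3 k hk le_rfl; omega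
  constructor
  · rintro ⟨i, hi1, hik, hei⟩
    by_cases hK : l1 k = n - k
    · exact ⟨k, hk, le_rfl, by omega⟩
    · have hik' : i < k := by
        rcases Nat.eq_or_lt_of_le hik with rfl | hlt
        · exact absurd hei hK
        · exact hlt
      have hlk : l1 k ≤ l1 i := mono i k hi1 hik le_rfl
      have hsc := (h5 i k hi1 hik' le_rfl).2 (by omega)
      exact ⟨i, hi1, hik, by omega⟩
  · rintro ⟨i, hi1, hik, hei⟩
    by_cases h0 : l2 i = 0
    · exact ⟨i, hi1, hik, by omega⟩
    · have hik' : i < k := by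
        rcases Nat.eq_or_lt_of_le hik with rfl | hlt
        · omega
        · exact hlt
      have hlk : l1 k ≤ l1 i := mono i k hi1 hik le_rfl
      have hsc := (h5 i k hi1 hik' le_rfl).2 (by omega)
      exact ⟨i, hi1, hik, by omega⟩
end
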